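/- arXiv:2503.10394 — 7 statements merged into one kernel-verified Lean document; each statement's English description precedes it below -/
import Mathlib

section
/- In M₂(α,β), for every integer k ≥ 1 the following identities hold: (1) X₂₂^k X₁₁ = X₁₁X₂₂^k + α⁻¹((αβ)^k − 1)·X₁₂X₂₁X₂₂^{k−1}; (2) X₂₂X₁₁^k = X₁₁^k X₂₂ + β(1 − (αβ)^{−k})·X₁₂X₂₁X₁₁^{k−1}. -/
noncomputable section

open MulOpposite

variable {K : Type*} [Field K]

/-- Defining relations of the two-parameter quantum matrix algebra `M₂(α,β)`.
Generators: `0 ↦ X₁₁`, `1 ↦ X₁₂`, `2 ↦ X₂₁`, `3 ↦ X₂₂`. -/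
inductive QMRel (α β : K) : FreeAlgebra K (Fin 4) → FreeAlgebra K (Fin 4) → Prop
  | r12_11 : QMRel α β (FreeAlgebra.ι K 1 * FreeAlgebra.ι K 0)
      (α • (FreeAlgebra.ι K 0 * FreeAlgebra.ι K 1))
  | r21_11 : QMRel α β (FreeAlgebra.ι K 2 * FreeAlgebra.ι K 0)
      (β • (FreeAlgebra.ι K 0 * FreeAlgebra.ι K 2))
  | r22_21 : QMRel α β (FreeAlgebra.ι K 3 * FreeAlgebra.ι K 2)
      (α • (FreeAlgebra.ι K 2 * FreeAlgebra.ι K 3))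
  | r22_12 : QMRel α β (FreeAlgebra.ι K 3 * FreeAlgebra.ι K 1)
      (β • (FreeAlgebra.ι K 1 * FreeAlgebra.ι K 3))
  | r21_12 : QMRel α β (FreeAlgebra.ι K 2 * FreeAlgebra.ι K 1)
      ((β * α⁻¹) • (FreeAlgebra.ι K 1 * FreeAlgebra.ι K 2))
  | r22_11 : QMRel α β (FreeAlgebra.ι K 3 * FreeAlgebra.ι K 0)
      (FreeAlgebra.ι K 0 * FreeAlgebra.ι K 3 + (β - α⁻¹) • (FreeAlgebra.ι K 1 * FreeAlgebra.ι K 2))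

/-- The two-parameter quantum matrix algebra `M₂(α,β)`. -/
abbrev QM (α β : K) : Type _ := RingQuot (QMRel α β)

def X11 (α β : K) : QM α β := RingQuot.mkAlgHom K (QMRel α β) (FreeAlgebra.ι K 0)
def X12 (α β : K) : QM α β := RingQuot.mkAlgHom K (QMRel α β) (FreeAlgebra.ι K 1)
def X21 (α β : K) : QM α β := RingQuot.mkAlgHom K (QMRel α β) (FreeAlgebra.ι K 2)
def X22 (α β : K) : QM α β := RingQuot.mkAlgHom K (QMRel α β) (FreeAlgebra.ι K 3)

/-- The quantum determinant `D = X₁₁X₂₂ − α⁻¹X₁₂X₂₁`. -/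
def Dq (α β : K) : QM α β := X11 α β * X22 α β - α⁻¹ • (X12 α β * X21 α β)

/-! Both identities are instances of one twisted commutation rule: if `y x = x y + c z` and `z`
`q`-commutes with `y`, then moving `x` past `y^(n+1)` leaves the correction term
`c (1 + q + ⋯ + qⁿ) z yⁿ`, and the geometric sum telescopes. For (1) take `y = X₂₂`,
`x = X₁₁`, `z = X₁₂X₂₁`, `q = αβ`; for (2) move `X₂₂` past `X₁₁^(n+1)` instead, using
`X₁₁ z = (αβ)⁻¹ z X₁₁`. -/

open Finset

section TwistedCommutation

variable {R A : Type*} [CommSemiring R] [Semiring A] [Algebra R A] {x y z : A} {c p q : R}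

theorem pow_mul_eq_smul_mul_pow (hyz : y * z = q • (z * y)) (n : ℕ) :
    y ^ n * z = q ^ n • (z * y ^ n) := by
  induction n with
  | zero => simp
  | succ n ih =>
    rw [pow_succ', mul_assoc, ih, mul_smul_comm, ← mul_assoc, hyz, smul_mul_assoc, smul_smul,
      mul_assoc, ← pow_succ', ← pow_succ]

theorem pow_succ_mul_eq_add_geom_sum (hyx : y * x = x * y + c • z)
    (hyz : y * z = q • (z * y)) (n : ℕ) :
    y ^ (n + 1) * x = x * y ^ (n + 1) + (c * ∑ i ∈ range (n + 1), q ^ i) • (z * y ^ n) := by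
  induction n with
  | zero => simpa using hyx
  | succ n ih =>
    calc y ^ (n + 2) * x = y ^ (n + 1) * x * y + c • (y ^ (n + 1) * z) := by
          rw [pow_succ _ (n + 1), mul_assoc, hyx, mul_add, mul_smul_comm, ← mul_assoc]
      _ = x * y ^ (n + 2) + (c * ∑ i ∈ range (n + 2), q ^ i) • (z * y ^ (n + 1)) := by
          rw [ih, pow_mul_eq_smul_mul_pow hyz, add_mul, smul_mul_assoc, mul_assoc, mul_assoc,
            ← pow_succ, ← pow_succ, sum_range_succ _ (n + 1), mul_add, add_smul, smul_smul,
            add_assoc]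

theorem mul_pow_succ_eq_add_geom_sum (hyx : y * x = x * y + c • z)
    (hxz : x * z = p • (z * x)) (n : ℕ) :
    y * x ^ (n + 1) = x ^ (n + 1) * y + (c * ∑ i ∈ range (n + 1), p ^ i) • (z * x ^ n) := by
  induction n with
  | zero => simpa using hyx
  | succ n ih =>
    calc y * x ^ (n + 2) = x ^ (n + 1) * (y * x) + (c * ∑ i ∈ range (n + 1), p ^ i) •
          (z * x ^ (n + 1)) := by
          rw [pow_succ _ (n + 1), ← mul_assoc, ih, add_mul, smul_mul_assoc, mul_assoc,
            mul_assoc, ← pow_succ]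
      _ = x ^ (n + 2) * y + (c * ∑ i ∈ range (n + 2), p ^ i) • (z * x ^ (n + 1)) := by
          rw [hyx, mul_add, mul_smul_comm, pow_mul_eq_smul_mul_pow hxz, ← mul_assoc, ← pow_succ,
            smul_smul, sum_range_succ _ (n + 1), mul_add, add_smul, add_assoc,
            add_comm (_ • _) (_ • _)]

end TwistedCommutation

section Relations

variable (α β : K)

theorem X12_mul_X11 : X12 α β * X11 α β = α • (X11 α β * X12 α β) := by
  simpa [X11, X12] using RingQuot.mkAlgHom_rel K (QMRel.r12_11 (α := α) (β := β))

theorem X21_mul_X11 : X21 α β * X11 α β = β • (X11 α β * X21 α β) := by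
  simpa [X11, X21] using RingQuot.mkAlgHom_rel K (QMRel.r21_11 (α := α) (β := β))

theorem X22_mul_X21 : X22 α β * X21 α β = α • (X21 α β * X22 α β) := by
  simpa [X21, X22] using RingQuot.mkAlgHom_rel K (QMRel.r22_21 (α := α) (β := β))

theorem X22_mul_X12 : X22 α β * X12 α β = β • (X12 α β * X22 α β) := by
  simpa [X12, X22] using RingQuot.mkAlgHom_rel K (QMRel.r22_12 (α := α) (β := β))

theorem X22_mul_X11 :
    X22 α β * X11 α β = X11 α β * X22 α β + (β - α⁻¹) • (X12 α β * X21 α β) := by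
  simpa [X11, X12, X21, X22] using RingQuot.mkAlgHom_rel K (QMRel.r22_11 (α := α) (β := β))

theorem X22_mul_X12_mul_X21 :
    X22 α β * (X12 α β * X21 α β) = (α * β) • (X12 α β * X21 α β * X22 α β) := by
  rw [← mul_assoc, X22_mul_X12, smul_mul_assoc, mul_assoc, X22_mul_X21, mul_smul_comm, smul_smul,
    mul_comm β, mul_assoc]

theorem X11_mul_X12_mul_X21 (hα : α ≠ 0) (hβ : β ≠ 0) :
    X11 α β * (X12 α β * X21 α β) = (α * β)⁻¹ • (X12 α β * X21 α β * X11 α β) := by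
  have h : X12 α β * X21 α β * X11 α β = (α * β) • (X11 α β * (X12 α β * X21 α β)) := by
    rw [mul_assoc, X21_mul_X11, mul_smul_comm, ← mul_assoc, X12_mul_X11, smul_mul_assoc,
      smul_smul, mul_comm β, mul_assoc]
  rw [h, smul_smul, inv_mul_cancel₀ (mul_ne_zero hα hβ), one_smul]

end Relations

theorem stmt0_general (α β : K) (hα : α ≠ 0) (hβ : β ≠ 0) (k : ℕ) :
    X22 α β ^ k * X11 α β =
      X11 α β * X22 α β ^ k +
        (α⁻¹ * ((α * β) ^ k - 1)) • (X12 α β * X21 α β * X22 α β ^ (k - 1)) ∧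
    X22 α β * X11 α β ^ k =
      X11 α β ^ k * X22 α β +
        (β * (1 - ((α * β) ^ k)⁻¹)) • (X12 α β * X21 α β * X11 α β ^ (k - 1)) := by
  obtain _ | n := k
  · simp
  have hc₁ : β - α⁻¹ = α⁻¹ * (α * β - 1) := by field_simp
  have hc₂ : β - α⁻¹ = β * (1 - (α * β)⁻¹) := by field_simp
  constructor
  · rw [pow_succ_mul_eq_add_geom_sum (X22_mul_X11 α β) (X22_mul_X12_mul_X21 α β), hc₁, mul_assoc,
      mul_geom_sum, Nat.add_sub_cancel]
  · rw [mul_pow_succ_eq_add_geom_sum (X22_mul_X11 α β) (X11_mul_X12_mul_X21 α β hα hβ), hc₂,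
      mul_assoc, mul_neg_geom_sum, inv_pow, Nat.add_sub_cancel]

/-- Lemma 2.2 of the paper. In `M₂(α,β)`, for every `k ≥ 1`:
(1) `X₂₂^k X₁₁ = X₁₁ X₂₂^k + α⁻¹((αβ)^k − 1) X₁₂X₂₁X₂₂^{k−1}`;
(2) `X₂₂ X₁₁^k = X₁₁^k X₂₂ + β(1 − (αβ)^{−k}) X₁₂X₂₁X₁₁^{k−1}`. -/
theorem stmt0 (α β : K) (hα : α ≠ 0) (hβ : β ≠ 0) (k : ℕ) (hk : 1 ≤ k) :
    X22 α β ^ k * X11 α β =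
      X11 α β * X22 α β ^ k +
        (α⁻¹ * ((α * β) ^ k - 1)) • (X12 α β * X21 α β * X22 α β ^ (k - 1)) ∧
    X22 α β * X11 α β ^ k =
      X11 α β ^ k * X22 α β +
        (β * (1 - ((α * β) ^ k)⁻¹)) • (X12 α β * X21 α β * X11 α β ^ (k - 1)) :=
  stmt0_general α β hα hβ k
end
end

section
/- In M₂(α,β) the quantum determinant D satisfies the commutation relations DX₁₁ = X₁₁D, DX₁₂ = α⁻¹β·X₁₂D, DX₂₁ = αβ⁻¹·X₂₁D and DX₂₂ = X₂₂D; in particular D is a normal element, and if t := ord(αβ⁻¹) is finite then D^t lies in the center of M₂(α,β). -/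
noncomputable section

open MulOpposite

variable {K : Type*} [Field K]

lemma hba (α β : K) : X12 α β * X11 α β = α • (X11 α β * X12 α β) := by
  have := RingQuot.mkAlgHom_rel K (QMRel.r12_11 (α := α) (β := β))
  simpa [X11, X12, map_mul, map_smul] using this

lemma hca (α β : K) : X21 α β * X11 α β = β • (X11 α β * X21 α β) := by
  have := RingQuot.mkAlgHom_rel K (QMRel.r21_11 (α := α) (β := β))
  simpa [X11, X21, map_mul, map_smul] using this

lemma hdc (α β : K) : X22 α β * X21 α β = α • (X21 α β * X22 α β) := by
  have := RingQuot.mkAlgHom_rel K (QMRel.r22_21 (α := α) (β := β))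
  simpa [X21, X22, map_mul, map_smul] using this

lemma hdb (α β : K) : X22 α β * X12 α β = β • (X12 α β * X22 α β) := by
  have := RingQuot.mkAlgHom_rel K (QMRel.r22_12 (α := α) (β := β))
  simpa [X12, X22, map_mul, map_smul] using this

lemma hcb (α β : K) : X21 α β * X12 α β = (β * α⁻¹) • (X12 α β * X21 α β) := by
  have := RingQuot.mkAlgHom_rel K (QMRel.r21_12 (α := α) (β := β))
  simpa [X12, X21, map_mul, map_smul] using this

lemma hda (α β : K) : X22 α β * X11 α β
    = X11 α β * X22 α β + (β - α⁻¹) • (X12 α β * X21 α β) := by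
  have := RingQuot.mkAlgHom_rel K (QMRel.r22_11 (α := α) (β := β))
  simpa [X11, X12, X21, X22, map_mul, map_smul, map_add] using this


section
variable (α β : K)

lemma hba' (x : QM α β) : X12 α β * (X11 α β * x) = α • (X11 α β * (X12 α β * x)) := by
  rw [← mul_assoc, hba, smul_mul_assoc, mul_assoc]
lemma hca' (x : QM α β) : X21 α β * (X11 α β * x) = β • (X11 α β * (X21 α β * x)) := by
  rw [← mul_assoc, hca, smul_mul_assoc, mul_assoc]
lemma hdc' (x : QM α β) : X22 α β * (X21 α β * x) = α • (X21 α β * (X22 α β * x)) := by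
  rw [← mul_assoc, hdc, smul_mul_assoc, mul_assoc]
lemma hdb' (x : QM α β) : X22 α β * (X12 α β * x) = β • (X12 α β * (X22 α β * x)) := by
  rw [← mul_assoc, hdb, smul_mul_assoc, mul_assoc]
lemma hcb' (x : QM α β) : X21 α β * (X12 α β * x) = (β * α⁻¹) • (X12 α β * (X21 α β * x)) := by
  rw [← mul_assoc, hcb, smul_mul_assoc, mul_assoc]
lemma hda' (x : QM α β) : X22 α β * (X11 α β * x)
    = X11 α β * (X22 α β * x) + (β - α⁻¹) • (X12 α β * (X21 α β * x)) := by
  rw [← mul_assoc, hda, add_mul, smul_mul_assoc, mul_assoc, mul_assoc]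

end

lemma Da (α β : K) (hα : α ≠ 0) (hβ : β ≠ 0) :
    Dq α β * X11 α β = X11 α β * Dq α β := by
  simp only [Dq, sub_mul, mul_sub, mul_add, add_mul, smul_mul_assoc, mul_smul_comm, smul_smul,
    smul_add, smul_sub, mul_assoc, hda', hca', hba', hdc', hdb', hcb', hda, hca, hba, hdc,
    hdb, hcb]
  match_scalars <;> field_simp <;> ring

lemma Db (α β : K) (hα : α ≠ 0) (hβ : β ≠ 0) :
    Dq α β * X12 α β = (α⁻¹ * β) • (X12 α β * Dq α β) := by
  simp only [Dq, sub_mul, mul_sub, mul_add, add_mul, smul_mul_assoc, mul_smul_comm, smul_smul,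
    smul_add, smul_sub, mul_assoc, hda', hca', hba', hdc', hdb', hcb', hda, hca, hba, hdc,
    hdb, hcb]
  match_scalars <;> field_simp <;> ring

lemma Dc (α β : K) (hα : α ≠ 0) (hβ : β ≠ 0) :
    Dq α β * X21 α β = (α * β⁻¹) • (X21 α β * Dq α β) := by
  simp only [Dq, sub_mul, mul_sub, mul_add, add_mul, smul_mul_assoc, mul_smul_comm, smul_smul,
    smul_add, smul_sub, mul_assoc, hda', hca', hba', hdc', hdb', hcb', hda, hca, hba, hdc,
    hdb, hcb]
  match_scalars <;> field_simp <;> ring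

lemma Dd (α β : K) (hα : α ≠ 0) (hβ : β ≠ 0) :
    Dq α β * X22 α β = X22 α β * Dq α β := by
  simp only [Dq, sub_mul, mul_sub, mul_add, add_mul, smul_mul_assoc, mul_smul_comm, smul_smul,
    smul_add, smul_sub, mul_assoc, hda', hca', hba', hdc', hdb', hcb', hda, hca, hba, hdc,
    hdb, hcb]
  match_scalars <;> field_simp <;> ring

lemma gen_ind (α β : K) (P : QM α β → Prop)
    (h0 : ∀ r : K, P (algebraMap K (QM α β) r))
    (ha : P (X11 α β)) (hb : P (X12 α β)) (hc : P (X21 α β)) (hd : P (X22 α β))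
    (hadd : ∀ x y, P x → P y → P (x + y))
    (hmul : ∀ x y, P x → P y → P (x * y)) : ∀ x, P x := by
  intro x
  obtain ⟨y, rfl⟩ := RingQuot.mkAlgHom_surjective K (QMRel α β) x
  induction y using FreeAlgebra.induction with
  | grade0 r => simpa using h0 r
  | grade1 i =>
    fin_cases i
    · exact ha
    · exact hb
    · exact hc
    · exact hd
  | add x y hx hy => rw [map_add]; exact hadd _ _ hx hy
  | mul x y hx hy => rw [map_mul]; exact hmul _ _ hx hy

lemma Dpow_b (α β : K) (hα : α ≠ 0) (hβ : β ≠ 0) (n : ℕ) :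
    Dq α β ^ n * X12 α β = ((α⁻¹ * β) ^ n) • (X12 α β * Dq α β ^ n) := by
  induction n with
  | zero => simp
  | succ n ih =>
    rw [pow_succ, mul_assoc, Db α β hα hβ, mul_smul_comm, ← mul_assoc, ih,
      smul_mul_assoc, smul_smul, pow_succ, mul_assoc]
    ring_nf
    congr 1
    exact mul_assoc _ _ _

lemma Dpow_c (α β : K) (hα : α ≠ 0) (hβ : β ≠ 0) (n : ℕ) :
    Dq α β ^ n * X21 α β = ((α * β⁻¹) ^ n) • (X21 α β * Dq α β ^ n) := by
  induction n with
  | zero => simp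
  | succ n ih =>
    rw [pow_succ, mul_assoc, Dc α β hα hβ, mul_smul_comm, ← mul_assoc, ih,
      smul_mul_assoc, smul_smul, pow_succ, mul_assoc]
    ring_nf
    congr 1
    exact mul_assoc _ _ _


/-- The quantum determinant `D` satisfies `DX₁₁ = X₁₁D`,
`DX₁₂ = α⁻¹β X₁₂D`, `DX₂₁ = αβ⁻¹ X₂₁D`, `DX₂₂ = X₂₂D`; in particular `D` is a
normal element, and if `t = ord(αβ⁻¹)` is finite then `D^t` is central. -/
theorem stmt2 (α β : K) (hα : α ≠ 0) (hβ : β ≠ 0) :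
    Dq α β * X11 α β = X11 α β * Dq α β ∧
    Dq α β * X12 α β = (α⁻¹ * β) • (X12 α β * Dq α β) ∧
    Dq α β * X21 α β = (α * β⁻¹) • (X21 α β * Dq α β) ∧
    Dq α β * X22 α β = X22 α β * Dq α β ∧
    (∀ a : QM α β, ∃ b : QM α β, Dq α β * a = b * Dq α β) ∧
    (∀ a : QM α β, ∃ b : QM α β, a * Dq α β = Dq α β * b) ∧
    (0 < orderOf (α * β⁻¹) →
      Dq α β ^ orderOf (α * β⁻¹) ∈ Subalgebra.center K (QM α β)) := by
  have hab : α * β⁻¹ ≠ 0 := by simp [hα, hβ]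
  refine ⟨Da α β hα hβ, Db α β hα hβ, Dc α β hα hβ, Dd α β hα hβ, ?_, ?_, ?_⟩
  · apply gen_ind α β (fun x => ∃ y, Dq α β * x = y * Dq α β)
    · exact fun r => ⟨algebraMap K _ r, by rw [Algebra.commutes]⟩
    · exact ⟨X11 α β, Da α β hα hβ⟩
    · exact ⟨(α⁻¹ * β) • X12 α β, by rw [Db α β hα hβ, smul_mul_assoc]⟩
    · exact ⟨(α * β⁻¹) • X21 α β, by rw [Dc α β hα hβ, smul_mul_assoc]⟩
    · exact ⟨X22 α β, Dd α β hα hβ⟩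
    · rintro x y ⟨x', hx⟩ ⟨y', hy⟩
      exact ⟨x' + y', by rw [mul_add, hx, hy, add_mul]⟩
    · rintro x y ⟨x', hx⟩ ⟨y', hy⟩
      exact ⟨x' * y', by rw [← mul_assoc, hx, mul_assoc, hy, ← mul_assoc]⟩
  · apply gen_ind α β (fun x => ∃ y, x * Dq α β = Dq α β * y)
    · exact fun r => ⟨algebraMap K _ r, by rw [Algebra.commutes]⟩
    · exact ⟨X11 α β, (Da α β hα hβ).symm⟩
    · refine ⟨(α * β⁻¹) • X12 α β, ?_⟩
      rw [mul_smul_comm, Db α β hα hβ, smul_smul,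
        show α * β⁻¹ * (α⁻¹ * β) = 1 by field_simp, one_smul]
    · refine ⟨(α⁻¹ * β) • X21 α β, ?_⟩
      rw [mul_smul_comm, Dc α β hα hβ, smul_smul,
        show α⁻¹ * β * (α * β⁻¹) = 1 by field_simp, one_smul]
    · exact ⟨X22 α β, (Dd α β hα hβ).symm⟩
    · rintro x y ⟨x', hx⟩ ⟨y', hy⟩
      exact ⟨x' + y', by rw [add_mul, hx, hy, mul_add]⟩
    · rintro x y ⟨x', hx⟩ ⟨y', hy⟩
      exact ⟨x' * y', by rw [mul_assoc, hy, ← mul_assoc, hx, mul_assoc]⟩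
  · intro _
    set t := orderOf (α * β⁻¹) with ht
    have h1 : (α * β⁻¹) ^ t = 1 := pow_orderOf_eq_one _
    have h2 : (α⁻¹ * β) ^ t = 1 := by
      have : (α⁻¹ * β) = (α * β⁻¹)⁻¹ := by field_simp
      rw [this, inv_pow, h1, inv_one]
    rw [Subalgebra.mem_center_iff]
    apply gen_ind α β (fun x => x * Dq α β ^ t = Dq α β ^ t * x)
    · exact fun r => Algebra.commutes r _
    · exact ((Commute.pow_left (Da α β hα hβ : Commute (Dq α β) (X11 α β)) t).symm)
    · rw [Dpow_b α β hα hβ t, h2, one_smul]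
    · rw [Dpow_c α β hα hβ t, h1, one_smul]
    · exact ((Commute.pow_left (Dd α β hα hβ : Commute (Dq α β) (X22 α β)) t).symm)
    · intro x y hx hy; rw [add_mul, hx, hy, mul_add]
    · intro x y hx hy; rw [mul_assoc, hy, ← mul_assoc, hx, mul_assoc]
end
end

section
/- Assume ord(αβ) = ord(αβ⁻¹) = t. Then for every pair of nonnegative integers (a,b) satisfying α^aβ^b = 1 and α^bβ^a = 1, there exists an integer k with 0 ≤ k ≤ l/t − 1 such that a ≡ kt (mod l) and b ≡ kt (mod l). -/
/-!
Write `u = αβ`, `v = αβ⁻¹` and `t = ord u = ord v`. The two relations give `u^(a+b) = 1` and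
`v^a = v^b`, so `t ∣ a + b` and `a ≡ b (mod t)`, whence `t ∣ 2a`. From `v^t = 1` we get
`α^t = β^t`, and since `α^t β^t = u^t = 1` also `l ∣ 2t`. If `t` is odd, `t ∣ a`; if `t = 2s`,
then `u^s = v^s = -1` forces `α^t = α^(2s) = u^s v^s = 1`, so `β^(a+b) = 1` and
`v^a = β^(-(a+b)) = 1` gives `t ∣ a` again. Finally `t ∣ b` turns the relations into
`α^(a+b) = β^(a+b) = 1`, so `l ∣ a + b`, while `l ∣ 2t ∣ 2b`; hence `a ≡ b (mod l)`, and
`k = (a mod l) / t` works.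
-/

section DivisionCommMonoid

variable {M : Type*} [DivisionCommMonoid M] {α β : M} {a b : ℕ}

lemma mul_inv_pow_eq_inv_pow_add (h : α ^ a * β ^ b = 1) :
    (α * β⁻¹) ^ a = (β ^ (a + b))⁻¹ := by
  rw [mul_pow, inv_pow, eq_inv_of_mul_eq_one_left h, pow_add, mul_inv_rev]

lemma mul_inv_pow_eq_mul_inv_pow (h1 : α ^ a * β ^ b = 1) (h2 : α ^ b * β ^ a = 1) :
    (α * β⁻¹) ^ a = (α * β⁻¹) ^ b := by
  rw [mul_inv_pow_eq_inv_pow_add h1, mul_inv_pow_eq_inv_pow_add h2, add_comm]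

end DivisionCommMonoid

section CommMonoid

variable {M : Type*} [CommMonoid M] {α β : M} {a b t : ℕ}

lemma orderOf_mul_dvd_add (h1 : α ^ a * β ^ b = 1) (h2 : α ^ b * β ^ a = 1) :
    orderOf (α * β) ∣ a + b := by
  rw [orderOf_dvd_iff_pow_eq_one]
  calc (α * β) ^ (a + b) = (α ^ a * β ^ b) * (α ^ b * β ^ a) := by
        rw [mul_pow, pow_add, pow_add]; ac_rfl
    _ = 1 := by rw [h1, h2, one_mul]

lemma pow_eq_pow_of_dvd (h : α ^ t = β ^ t) (hb : t ∣ b) : α ^ b = β ^ b := by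
  obtain ⟨c, rfl⟩ := hb
  rw [pow_mul, pow_mul, h]

lemma lcm_orderOf_dvd_add (h : α ^ t = β ^ t) (htb : t ∣ b)
    (h1 : α ^ a * β ^ b = 1) (h2 : α ^ b * β ^ a = 1) :
    Nat.lcm (orderOf α) (orderOf β) ∣ a + b := by
  refine Nat.lcm_dvd ?_ ?_ <;> rw [orderOf_dvd_iff_pow_eq_one, pow_add]
  · rwa [← pow_eq_pow_of_dvd h htb] at h1
  · rwa [pow_eq_pow_of_dvd h htb, mul_comm] at h2

end CommMonoid

lemma pow_eq_neg_one_of_orderOf_eq_two_mul {R : Type*} [CommRing R] [NoZeroDivisors R] {x : R}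
    {s : ℕ} (hs : s ≠ 0) (h : orderOf x = 2 * s) : x ^ s = -1 := by
  refine IsPrimitiveRoot.eq_neg_one_of_two_right ?_
  have := (IsPrimitiveRoot.orderOf x).pow_of_dvd hs (h ▸ dvd_mul_left s 2)
  rwa [h, Nat.mul_div_cancel _ (Nat.pos_of_ne_zero hs)] at this

lemma Nat.exists_le_modEq_mul_of_dvd {t l a b : ℕ} (htl : t ∣ l) (hl : 0 < l) (hta : t ∣ a)
    (hab : a ≡ b [MOD l]) :
    ∃ k, k ≤ l / t - 1 ∧ a ≡ k * t [MOD l] ∧ b ≡ k * t [MOD l] := by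
  have hk : a % l / t * t = a % l := Nat.div_mul_cancel ((Nat.dvd_mod_iff htl).2 hta)
  have hak : a ≡ a % l / t * t [MOD l] := by rw [hk]; exact (Nat.mod_modEq a l).symm
  refine ⟨a % l / t, ?_, hak, hab.symm.trans hak⟩
  have := Nat.div_lt_div_of_lt_of_dvd htl (Nat.mod_lt a hl)
  omega

lemma Nat.modEq_of_dvd_add_of_dvd_two_mul {l a b : ℕ} (hsum : l ∣ a + b) (hb : l ∣ 2 * b) :
    a ≡ b [MOD l] :=
  Nat.ModEq.add_right_cancel' b <|
    (Nat.modEq_zero_iff_dvd.2 hsum).trans (Nat.modEq_zero_iff_dvd.2 (two_mul b ▸ hb)).symm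

section Field

variable {K : Type*} [Field K] {α β : K} {a b : ℕ}

lemma pow_orderOf_mul_eq_pow (hβ : β ≠ 0) (ht : orderOf (α * β) = orderOf (α * β⁻¹)) :
    α ^ orderOf (α * β) = β ^ orderOf (α * β) := by
  have := ht ▸ pow_orderOf_eq_one (α * β⁻¹)
  rwa [mul_pow, inv_pow, mul_inv_eq_one₀ (pow_ne_zero _ hβ)] at this

lemma lcm_orderOf_dvd_two_mul (hβ : β ≠ 0) (ht : orderOf (α * β) = orderOf (α * β⁻¹)) :
    Nat.lcm (orderOf α) (orderOf β) ∣ 2 * orderOf (α * β) := by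
  have hpow := pow_orderOf_mul_eq_pow hβ ht
  have hone : α ^ orderOf (α * β) * β ^ orderOf (α * β) = 1 := by
    rw [← mul_pow, pow_orderOf_eq_one]
  refine Nat.lcm_dvd ?_ ?_ <;> rw [orderOf_dvd_iff_pow_eq_one, two_mul, pow_add]
  · rwa [hpow] at hone ⊢
  · rwa [hpow] at hone

lemma pow_orderOf_mul_eq_one_of_even (hβ : β ≠ 0) (ht : orderOf (α * β) = orderOf (α * β⁻¹))
    (heven : Even (orderOf (α * β))) : α ^ orderOf (α * β) = 1 := by
  obtain ⟨s, hs⟩ := heven.two_dvd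
  rcases eq_or_ne s 0 with rfl | hs0
  · rw [hs, mul_zero, pow_zero]
  have hu := pow_eq_neg_one_of_orderOf_eq_two_mul hs0 hs
  have hv := pow_eq_neg_one_of_orderOf_eq_two_mul hs0 (ht ▸ hs)
  calc α ^ orderOf (α * β) = (α * β) ^ s * (α * β⁻¹) ^ s := by
        rw [hs, ← mul_pow, mul_mul_mul_comm, mul_inv_cancel₀ hβ, mul_one, ← sq, ← pow_mul]
    _ = 1 := by rw [hu, hv, neg_one_mul, neg_neg]

lemma orderOf_mul_dvd_of_pow_mul_pow_eq_one (hβ : β ≠ 0)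
    (ht : orderOf (α * β) = orderOf (α * β⁻¹)) (ht0 : 0 < orderOf (α * β))
    (h1 : α ^ a * β ^ b = 1) (h2 : α ^ b * β ^ a = 1) : orderOf (α * β) ∣ a := by
  have hsum := orderOf_mul_dvd_add h1 h2
  rcases Nat.even_or_odd (orderOf (α * β)) with heven | hodd
  · have hβt : β ^ orderOf (α * β) = 1 :=
      pow_orderOf_mul_eq_pow hβ ht ▸ pow_orderOf_mul_eq_one_of_even hβ ht heven
    have hβsum : β ^ (a + b) = 1 :=
      orderOf_dvd_iff_pow_eq_one.1 ((orderOf_dvd_of_pow_eq_one hβt).trans hsum)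
    rw [ht, orderOf_dvd_iff_pow_eq_one, mul_inv_pow_eq_inv_pow_add h1, hβsum, inv_one]
  · have hmod : a ≡ b [MOD orderOf (α * β)] := ht ▸
      (orderOf_pos_iff.1 (ht ▸ ht0)).pow_eq_pow_iff_modEq.1 (mul_inv_pow_eq_mul_inv_pow h1 h2)
    have h2a : orderOf (α * β) ∣ 2 * a := two_mul a ▸
      Nat.modEq_zero_iff_dvd.1 ((hmod.add_left a).trans (Nat.modEq_zero_iff_dvd.2 hsum))
    exact hodd.coprime_two_right.dvd_of_dvd_mul_left h2a

end Field

theorem stmt3_general {K : Type*} [Field K] (α β : K) (hβ : β ≠ 0)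
    (hoα : 0 < orderOf α) (hoβ : 0 < orderOf β)
    (ht : orderOf (α * β) = orderOf (α * β⁻¹))
    (a b : ℕ) (h1 : α ^ a * β ^ b = 1) (h2 : α ^ b * β ^ a = 1) :
    ∃ k : ℕ,
      k ≤ Nat.lcm (orderOf α) (orderOf β) / orderOf (α * β) - 1 ∧
      a ≡ k * orderOf (α * β) [MOD Nat.lcm (orderOf α) (orderOf β)] ∧
      b ≡ k * orderOf (α * β) [MOD Nat.lcm (orderOf α) (orderOf β)] := by
  have hl : 0 < Nat.lcm (orderOf α) (orderOf β) := Nat.lcm_pos hoα hoβ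
  have htl : orderOf (α * β) ∣ Nat.lcm (orderOf α) (orderOf β) :=
    (Commute.all α β).orderOf_mul_dvd_lcm
  have ht0 : 0 < orderOf (α * β) := Nat.pos_of_dvd_of_pos htl hl
  have hta := orderOf_mul_dvd_of_pow_mul_pow_eq_one hβ ht ht0 h1 h2
  have htb := orderOf_mul_dvd_of_pow_mul_pow_eq_one hβ ht ht0 h2 h1
  have hsum := lcm_orderOf_dvd_add (pow_orderOf_mul_eq_pow hβ ht) htb h1 h2
  have h2b := (lcm_orderOf_dvd_two_mul hβ ht).trans (mul_dvd_mul_left 2 htb)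
  exact Nat.exists_le_modEq_mul_of_dvd htl hl hta (Nat.modEq_of_dvd_add_of_dvd_two_mul hsum h2b)

/-- Lemma 3.1 of the paper. Let `α, β` be roots of unity in a field `K`
with `αβ ≠ 1` and `αβ⁻¹ ≠ 1`, and assume `ord(αβ) = ord(αβ⁻¹) = t`. Set
`m = ord(α)`, `n = ord(β)`, `l = lcm(m,n)`. Then every pair of nonnegative integers
`(a,b)` satisfying `α^aβ^b = 1 = α^bβ^a` satisfies `a ≡ kt (mod l)` and
`b ≡ kt (mod l)` for some `0 ≤ k ≤ l/t − 1`. -/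
theorem stmt3 {K : Type*} [Field K] (α β : K) (hα : α ≠ 0) (hβ : β ≠ 0)
    (hoα : 0 < orderOf α) (hoβ : 0 < orderOf β)
    (hab : α * β ≠ 1) (hab' : α * β⁻¹ ≠ 1)
    (ht : orderOf (α * β) = orderOf (α * β⁻¹))
    (a b : ℕ) (h1 : α ^ a * β ^ b = 1) (h2 : α ^ b * β ^ a = 1) :
    ∃ k : ℕ,
      k ≤ Nat.lcm (orderOf α) (orderOf β) / orderOf (α * β) - 1 ∧
      a ≡ k * orderOf (α * β) [MOD Nat.lcm (orderOf α) (orderOf β)] ∧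
      b ≡ k * orderOf (α * β) [MOD Nat.lcm (orderOf α) (orderOf β)] :=
  stmt3_general α β hβ hoα hoβ ht a b h1 h2
end

section
/- Assume ord(αβ) = ord(αβ⁻¹) = t. Then in M₂(α,β) the quantum determinant satisfies the algebraic dependence relation D^t = X₁₁^tX₂₂^t + (−1)^t α^{−t(t+1)/2} β^{t(t−1)/2} X₁₂^tX₂₁^t. -/
/-! With `v = X₁₂X₂₁`, the quantum determinant `D` commutes with `X₂₂` and with `v`, while
`v X₂₂ = (αβ)⁻¹ X₂₂ v`. Peeling off one factor at a time therefore gives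
`X₁₁ⁿX₂₂ⁿ = ∏_{k<n} (D + α⁻¹(αβ)⁻ᵏ v)`, a product of pairwise commuting factors. For
`n = t = ord(αβ)` the cyclotomic identity `∏_{k<t} (x - ζᵏy) = xᵗ - yᵗ` collapses it to
`Dᵗ - (-α⁻¹)ᵗ vᵗ`, and `vᵗ = (βα⁻¹)^(t(t-1)/2) X₁₂ᵗX₂₁ᵗ` because `X₂₁X₁₂ = βα⁻¹ X₁₂X₂₁`. -/

noncomputable section

open MulOpposite

variable {K : Type*} [Field K]

open Polynomial in
theorem Commute.list_prod_sub_pow_smul_eq_pow_sub_pow {A : Type*} [Ring A] [Algebra K A]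
    {x y : A} (hxy : Commute x y) {ζ : K} {t : ℕ} (hζ : IsPrimitiveRoot ζ t) (ht : 0 < t) :
    ((List.range t).map fun k => x - ζ ^ k • y).prod = x ^ t - y ^ t := by
  have hfactor : (X ^ t - C (X ^ t) : K[X][X]) = ∏ k ∈ Finset.range t, (X - C (C ζ ^ k * X)) :=
    X_pow_sub_C_eq_prod (hζ.map_of_injective C_injective) ht rfl
  -- evaluate this factorisation of `Xᵗ - Yᵗ` in `K[Y][X]` at `X = x`, `Y = y`
  let φ : K[X][X] →ₐ[K] A := eval₂AlgHom (aeval y) x fun p =>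
    (Algebra.commute_of_mem_adjoin_singleton_of_commute (aeval_mem_adjoin_singleton K y) hxy).symm
  have hX : φ X = x := eval₂_X _ _
  have hC : ∀ p, φ (C p) = aeval y p := fun p => eval₂_C _ _
  have hmap := congrArg φ hfactor
  rw [Finset.prod_eq_multiset_prod, Finset.range_val, Multiset.range, Multiset.map_coe,
    Multiset.prod_coe, map_list_prod, List.map_map] at hmap
  simpa [Function.comp_def, hX, hC, Algebra.smul_def] using hmap.symm

section SkewCommute

variable {R A : Type*} [CommSemiring R] [Semiring A] [Algebra R A] {x y : A} {r : R}

theorem mul_pow_eq_smul_pow_mul (h : x * y = r • (y * x)) (n : ℕ) :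
    x * y ^ n = r ^ n • (y ^ n * x) := by
  induction n with
  | zero => simp
  | succ n ih =>
    rw [pow_succ, ← mul_assoc, ih, smul_mul_assoc, mul_assoc, h, mul_smul_comm, smul_smul,
      ← pow_succ, ← mul_assoc, ← pow_succ]

theorem pow_mul_eq_smul_mul_pow_s5 (h : y * x = r • (x * y)) (n : ℕ) :
    y ^ n * x = r ^ n • (x * y ^ n) := by
  induction n with
  | zero => simp
  | succ n ih =>
    rw [pow_succ', mul_assoc, ih, mul_smul_comm, ← mul_assoc, h, smul_mul_assoc, smul_smul,
      ← pow_succ, mul_assoc, ← pow_succ']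

theorem mul_pow_eq_smul_pow_mul_pow (h : y * x = r • (x * y)) (n : ℕ) :
    (x * y) ^ n = r ^ n.choose 2 • (x ^ n * y ^ n) := by
  induction n with
  | zero => simp
  | succ n ih =>
    rw [pow_succ, ih, smul_mul_assoc, mul_assoc, ← mul_assoc (y ^ n), pow_mul_eq_smul_mul_pow_s5 h,
      smul_mul_assoc, mul_smul_comm, smul_smul, ← pow_add, Nat.choose_succ_succ',
      Nat.choose_one_right, add_comm n, mul_assoc x, ← mul_assoc, ← pow_succ, ← pow_succ]

end SkewCommute

section QuantumMatrix

variable {A : Type*} [Ring A] [Algebra K A] {α β : K} {a b c d : A}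

structure IsQuantumMatrix (α β : K) (a b c d : A) : Prop where
  ba : b * a = α • (a * b)
  ca : c * a = β • (a * c)
  dc : d * c = α • (c * d)
  db : d * b = β • (b * d)
  cb : c * b = (β * α⁻¹) • (b * c)
  da : d * a = a * d + (β - α⁻¹) • (b * c)

def qdet (α : K) (a b c d : A) : A := a * d - α⁻¹ • (b * c)

namespace IsQuantumMatrix

theorem bc_mul_a (h : IsQuantumMatrix α β a b c d) : b * c * a = (α * β) • (a * (b * c)) := by
  rw [mul_assoc, h.ca, mul_smul_comm, ← mul_assoc, h.ba, smul_mul_assoc, smul_smul, mul_comm β,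
    mul_assoc]

theorem d_mul_bc (h : IsQuantumMatrix α β a b c d) : d * (b * c) = (α * β) • (b * c * d) := by
  rw [← mul_assoc, h.db, smul_mul_assoc, mul_assoc, h.dc, mul_smul_comm, smul_smul, mul_comm β,
    ← mul_assoc]

theorem commute_qdet_bc (h : IsQuantumMatrix α β a b c d) :
    Commute (qdet α a b c d) (b * c) := by
  refine Commute.sub_left ?_ ((Commute.refl _).smul_left _)
  rw [Commute, SemiconjBy, mul_assoc, h.d_mul_bc, ← mul_assoc, h.bc_mul_a, mul_smul_comm,
    smul_mul_assoc]
  simp only [mul_assoc]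

theorem commute_d_qdet (h : IsQuantumMatrix α β a b c d) (hα : α ≠ 0) :
    Commute d (qdet α a b c d) := by
  calc d * qdet α a b c d = d * a * d - α⁻¹ • (d * (b * c)) := by
        rw [qdet, mul_sub, mul_smul_comm, mul_assoc]
    _ = (a * d + (β - α⁻¹) • (b * c)) * d - (α⁻¹ * (α * β)) • (b * c * d) := by
        rw [h.da, h.d_mul_bc, smul_smul]
    _ = qdet α a b c d * d := by
        rw [← mul_assoc, inv_mul_cancel₀ hα, one_mul, qdet, add_mul, sub_mul, smul_mul_assoc,
          smul_mul_assoc]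
        module

theorem pow_mul_pow_eq_list_prod (h : IsQuantumMatrix α β a b c d) (hα : α ≠ 0) (hβ : β ≠ 0)
    (n : ℕ) :
    a ^ n * d ^ n =
      ((List.range n).map fun k => qdet α a b c d - (α * β)⁻¹ ^ k • (-α⁻¹) • (b * c)).prod := by
  have hbcd : b * c * d = (α * β)⁻¹ • (d * (b * c)) := by
    rw [h.d_mul_bc, smul_smul, inv_mul_cancel₀ (mul_ne_zero hα hβ), one_smul]
  induction n with
  | zero => simp
  | succ n ih =>
    have hD : d ^ n * qdet α a b c d = qdet α a b c d * d ^ n :=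
      ((h.commute_d_qdet hα).pow_left n).eq
    calc a ^ (n + 1) * d ^ (n + 1) = a ^ n * ((a * d) * d ^ n) := by
          rw [pow_succ, pow_succ', mul_assoc, mul_assoc]
      _ = a ^ n * ((qdet α a b c d + α⁻¹ • (b * c)) * d ^ n) := by rw [qdet, sub_add_cancel]
      _ = a ^ n * (d ^ n * qdet α a b c d + α⁻¹ • (α * β)⁻¹ ^ n • (d ^ n * (b * c))) := by
          rw [add_mul, smul_mul_assoc, mul_pow_eq_smul_pow_mul hbcd, hD]
      _ = a ^ n * d ^ n * (qdet α a b c d - (α * β)⁻¹ ^ n • (-α⁻¹) • (b * c)) := by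
          simp only [mul_add, mul_sub, mul_smul_comm, mul_assoc]
          module
      _ = _ := by rw [ih, List.prod_range_succ]

theorem qdet_pow_eq (h : IsQuantumMatrix α β a b c d) {t : ℕ} (ht : 0 < t)
    (hq : IsPrimitiveRoot (α * β) t) :
    qdet α a b c d ^ t =
      a ^ t * d ^ t + ((-α⁻¹) ^ t * (β * α⁻¹) ^ t.choose 2) • (b ^ t * c ^ t) := by
  have hαβ : α * β ≠ 0 := hq.ne_zero ht.ne'
  have hprod := (h.commute_qdet_bc.smul_right (-α⁻¹)).list_prod_sub_pow_smul_eq_pow_sub_pow hq.inv ht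
  rw [← h.pow_mul_pow_eq_list_prod (left_ne_zero_of_mul hαβ) (right_ne_zero_of_mul hαβ),
    _root_.smul_pow, mul_pow_eq_smul_pow_mul_pow h.cb, smul_smul] at hprod
  rw [hprod, sub_add_cancel]

end IsQuantumMatrix

theorem isQuantumMatrix_X (α β : K) :
    IsQuantumMatrix α β (X11 α β) (X12 α β) (X21 α β) (X22 α β) := by
  refine ⟨?_, ?_, ?_, ?_, ?_, ?_⟩ <;>
    simp only [X11, X12, X21, X22, ← map_mul, ← map_smul, ← map_add] <;>
    exact RingQuot.mkAlgHom_rel K (by constructor)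

end QuantumMatrix

theorem neg_inv_pow_mul_pow_choose_two (α β : K) (t : ℕ) :
    (-α⁻¹) ^ t * (β * α⁻¹) ^ t.choose 2 =
      (-1) ^ t * (α ^ (t * (t + 1) / 2))⁻¹ * β ^ (t * (t - 1) / 2) := by
  have h : t * (t + 1) / 2 = t.choose 2 + t := by
    simpa [Nat.choose_two_right, mul_comm] using Nat.triangle_succ t
  rw [h, ← Nat.choose_two_right, neg_eq_neg_one_mul, mul_pow, mul_pow, pow_add, mul_inv,
    inv_pow, inv_pow]
  ring

theorem stmt5_general (α β : K)
    (hoα : 0 < orderOf α) (hoβ : 0 < orderOf β) :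
    Dq α β ^ orderOf (α * β) =
      X11 α β ^ orderOf (α * β) * X22 α β ^ orderOf (α * β) +
        ((-1 : K) ^ orderOf (α * β) *
            (α ^ (orderOf (α * β) * (orderOf (α * β) + 1) / 2))⁻¹ *
            β ^ (orderOf (α * β) * (orderOf (α * β) - 1) / 2)) •
          (X12 α β ^ orderOf (α * β) * X21 α β ^ orderOf (α * β)) := by
  have hpos : 0 < orderOf (α * β) :=
    ((orderOf_pos_iff.mp hoα).mul (orderOf_pos_iff.mp hoβ)).orderOf_pos
  rw [← neg_inv_pow_mul_pow_choose_two]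
  exact (isQuantumMatrix_X α β).qdet_pow_eq hpos (IsPrimitiveRoot.orderOf _)

/-- Let `α, β` be roots of unity with `αβ ≠ 1`, `αβ⁻¹ ≠ 1` and
`ord(αβ) = ord(αβ⁻¹) = t`. Then in `M₂(α,β)`:
`D^t = X₁₁^tX₂₂^t + (−1)^t α^{−t(t+1)/2} β^{t(t−1)/2} X₁₂^tX₂₁^t`. -/
theorem stmt5 (α β : K) (hα : α ≠ 0) (hβ : β ≠ 0)
    (hoα : 0 < orderOf α) (hoβ : 0 < orderOf β)
    (hab : α * β ≠ 1) (hab' : α * β⁻¹ ≠ 1)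
    (ht : orderOf (α * β) = orderOf (α * β⁻¹)) :
    Dq α β ^ orderOf (α * β) =
      X11 α β ^ orderOf (α * β) * X22 α β ^ orderOf (α * β) +
        ((-1 : K) ^ orderOf (α * β) *
            (α ^ (orderOf (α * β) * (orderOf (α * β) + 1) / 2))⁻¹ *
            β ^ (orderOf (α * β) * (orderOf (α * β) - 1) / 2)) •
          (X12 α β ^ orderOf (α * β) * X21 α β ^ orderOf (α * β)) :=
  stmt5_general α β hoα hoβ
end
end

section
/- Let α, β ∈ K* be roots of unity with α ≠ β and α ≠ β⁻¹. Set m := ord(α), n := ord(β), l := lcm(m,n), and let g ∈ K* with ord(g) = l and integers A, B with α = g^A and β = g^B. Then l²/gcd(A² − B², l) = ord(αβ)·ord(αβ⁻¹) if n divides ord(αβ)·ord(αβ⁻¹), and l²/gcd(A² − B², l) = 2·ord(αβ)·ord(αβ⁻¹) otherwise. (This quantity is the PI degree of the two-parameter quantum matrix algebra M₂(α,β).) -/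
/-!
Write `α = g ^ A`, `β = g ^ B` with `ord g = l`, and put `a = gcd(A + B, l)`, `b = gcd(A - B, l)`,
`c = gcd((A + B)(A - B), l)`. Then `ord(αβ) ord(αβ⁻¹) = l² / (ab)`, so the theorem is about the
quotient `q = ab / c`. Since `lcm(a, b) ∣ c`, `q` divides `gcd(a, b)`, and this divides `2` because
`l = lcm(ord α, ord β)` forces `gcd(A, B, l) = 1`. If `q = 1` then `ab ∣ l`, so `l` (hence `ord β`)
divides `ord(αβ) ord(αβ⁻¹)`. If `q = 2` then `A + B` and `l` are even, so `B` is odd and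
`ord β` carries the full power of `2` in `l`, while `2c ∤ l` makes `ord(αβ) ord(αβ⁻¹) = l² / (2c)`
fall one factor of `2` short.
-/

theorem IsOfFinOrder.orderOf_zpow {G : Type*} [Group G] {x : G} (hx : IsOfFinOrder x) (z : ℤ) :
    orderOf (x ^ z) = orderOf x / Int.gcd z (orderOf x) := by
  obtain ⟨n, rfl | rfl⟩ := Int.eq_nat_or_neg z <;>
    simp [hx.orderOf_pow, Int.gcd, Nat.gcd_comm]

theorem Nat.coprime_of_lcm_div_div_eq {l a b : ℕ} (hl : l ≠ 0) (ha : a ∣ l) (hb : b ∣ l)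
    (h : Nat.lcm (l / a) (l / b) = l) : Nat.Coprime a b := by
  rw [Nat.div_lcm_eq_div_gcd ha hb, Nat.div_eq_self] at h
  exact h.resolve_left hl

theorem Nat.dvd_div_mul_div {l a b : ℕ} (ha : a ∣ l) (hb : b ∣ l) (hab : a * b ∣ l) :
    l ∣ l / a * (l / b) := by
  rw [Nat.div_mul_div_comm ha hb, Nat.mul_div_assoc l hab]
  exact dvd_mul_right l _

theorem Int.exists_gcd_mul_gcd_eq_gcd_mul_mul (u v : ℤ) {l : ℕ} (hl : l ≠ 0) :
    ∃ q, q ∣ Nat.gcd (Int.gcd u l) (Int.gcd v l) ∧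
      Int.gcd u l * Int.gcd v l = Int.gcd (u * v) l * q := by
  obtain ⟨q, hq⟩ := Int.gcd_mul_left_dvd_mul_gcd (l : ℤ) u v
  refine ⟨q, ?_, hq⟩
  have hlcm : Nat.lcm (Int.gcd u l) (Int.gcd v l) ∣ Int.gcd (u * v) l := by
    apply Int.dvd_gcd
    · exact (Int.natCast_dvd_natCast.mpr (Nat.lcm_dvd_mul _ _)).trans <| by
        push_cast
        exact mul_dvd_mul (Int.gcd_dvd_left _ _) (Int.gcd_dvd_left _ _)
    · exact Int.natCast_dvd_natCast.mpr <| Nat.lcm_dvd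
        (Int.natCast_dvd_natCast.mp (Int.gcd_dvd_right _ _))
        (Int.natCast_dvd_natCast.mp (Int.gcd_dvd_right _ _))
  have hc : 0 < Int.gcd (u * v) l := Int.gcd_pos_of_ne_zero_right _ (by exact_mod_cast hl)
  refine Nat.dvd_of_mul_dvd_mul_left hc ?_
  rw [← hq, ← Nat.gcd_mul_lcm, mul_comm (Int.gcd (u * v) l)]
  exact mul_dvd_mul_left _ hlcm

theorem Int.not_two_mul_gcd_mul_dvd {u v : ℤ} {l : ℕ} (hl : l ≠ 0)
    (h : Int.gcd u l * Int.gcd v l = Int.gcd (u * v) l * 2) :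
    ¬ 2 * Int.gcd (u * v) l ∣ l := by
  intro hdvd
  have hc : 0 < Int.gcd (u * v) l := Int.gcd_pos_of_ne_zero_right _ (by exact_mod_cast hl)
  have : 2 * Int.gcd (u * v) l ∣ Int.gcd (u * v) l := by
    refine Int.dvd_gcd ?_ (Int.natCast_dvd_natCast.mpr hdvd)
    rw [mul_comm, ← h]
    push_cast
    exact mul_dvd_mul (Int.gcd_dvd_left _ _) (Int.gcd_dvd_left _ _)
  have := Nat.le_of_dvd hc this
  omega

theorem Nat.not_div_dvd_div_mul_div {l a b c d : ℕ} (hl : l ≠ 0) (ha : a ∣ l) (hb : b ∣ l)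
    (hc : c ∣ l) (hd : d ∣ l) (habc : a * b = c * 2) (hcl : ¬ 2 * c ∣ l) (hd2 : ¬ 2 ∣ d) :
    ¬ l / d ∣ l / a * (l / b) := by
  rintro ⟨k, hk⟩
  obtain ⟨p, hp⟩ := hc
  have hc0 : c ≠ 0 := by
    rintro rfl
    exact hl (by simpa using hp)
  have hprod : l / d * k * (c * 2) = l * l := by
    rw [← hk, ← habc, Nat.div_mul_div_comm ha hb, Nat.div_mul_cancel (Nat.mul_dvd_mul ha hb)]
  have hkl : l * (k * c * 2) = l * (l * d) := by
    calc l * (k * c * 2) = l / d * k * (c * 2) * d := by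
          conv_lhs => rw [← Nat.div_mul_cancel hd]
          ring
      _ = l * (l * d) := by rw [hprod]; ring
  have hkd : c * (2 * k) = c * (p * d) := by
    have := Nat.eq_of_mul_eq_mul_left (Nat.pos_of_ne_zero hl) hkl
    rw [hp] at this
    linarith
  have h2 : 2 ∣ p * d := ⟨k, (Nat.eq_of_mul_eq_mul_left (Nat.pos_of_ne_zero hc0) hkd).symm⟩
  rcases (Nat.prime_two.dvd_mul).mp h2 with h2p | h2d
  · exact hcl (hp ▸ mul_comm c p ▸ Nat.mul_dvd_mul_right h2p c)
  · exact hd2 h2d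

section
variable {l : ℕ} {A B : ℤ}

theorem gcd_gcd_add_gcd_sub_dvd_two (hcop : (Int.gcd A l).Coprime (Int.gcd B l)) :
    Nat.gcd (Int.gcd (A + B) l) (Int.gcd (A - B) l) ∣ 2 := by
  set e := Nat.gcd (Int.gcd (A + B) l) (Int.gcd (A - B) l)
  have he_add : (e : ℤ) ∣ A + B :=
    (Int.natCast_dvd_natCast.mpr (Nat.gcd_dvd_left _ _)).trans (Int.gcd_dvd_left _ _)
  have he_sub : (e : ℤ) ∣ A - B :=
    (Int.natCast_dvd_natCast.mpr (Nat.gcd_dvd_right _ _)).trans (Int.gcd_dvd_left _ _)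
  have he_l : (e : ℤ) ∣ 2 * l :=
    ((Int.natCast_dvd_natCast.mpr (Nat.gcd_dvd_left _ _)).trans (Int.gcd_dvd_right _ _)).mul_left 2
  have heA : e ∣ 2 * Int.gcd A l := by
    rw [show 2 * Int.gcd A l = Int.gcd (2 * A) (2 * l) by simp [Int.gcd_mul_left]]
    refine Int.dvd_gcd ?_ he_l
    rw [show 2 * A = A + B + (A - B) by ring]
    exact dvd_add he_add he_sub
  have heB : e ∣ 2 * Int.gcd B l := by
    rw [show 2 * Int.gcd B l = Int.gcd (2 * B) (2 * l) by simp [Int.gcd_mul_left]]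
    refine Int.dvd_gcd ?_ he_l
    rw [show 2 * B = A + B - (A - B) by ring]
    exact dvd_sub he_add he_sub
  simpa [Nat.gcd_mul_left, hcop] using Nat.dvd_gcd heA heB

theorem not_two_dvd_gcd_of_two_dvd_gcd_add (hcop : (Int.gcd A l).Coprime (Int.gcd B l))
    (h : 2 ∣ Int.gcd (A + B) l) : ¬ 2 ∣ Int.gcd B l := by
  intro hB
  obtain ⟨h2AB, h2l⟩ := Int.dvd_gcd_iff.mp h
  have h2B : (2 : ℤ) ∣ B := (Int.dvd_gcd_iff.mp hB).1
  have h2A : 2 ∣ Int.gcd A l := Int.dvd_gcd (by simpa using dvd_sub h2AB h2B) h2l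
  simpa using Nat.dvd_gcd h2A hB |>.trans hcop.gcd_eq_one.dvd

theorem sq_div_gcd_sq_sub_sq (hl : l ≠ 0) (hcop : (Int.gcd A l).Coprime (Int.gcd B l)) :
    (l / Int.gcd B l ∣ l / Int.gcd (A + B) l * (l / Int.gcd (A - B) l) →
      l ^ 2 / Int.gcd (A ^ 2 - B ^ 2) l = l / Int.gcd (A + B) l * (l / Int.gcd (A - B) l)) ∧
    (¬ l / Int.gcd B l ∣ l / Int.gcd (A + B) l * (l / Int.gcd (A - B) l) →
      l ^ 2 / Int.gcd (A ^ 2 - B ^ 2) l =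
        2 * (l / Int.gcd (A + B) l * (l / Int.gcd (A - B) l))) := by
  rw [show A ^ 2 - B ^ 2 = (A + B) * (A - B) by ring]
  have hdvd (X : ℤ) : Int.gcd X l ∣ l := Int.gcd_dvd_natAbs_right X l
  obtain ⟨q, hq_dvd, hq⟩ := Int.exists_gcd_mul_gcd_eq_gcd_mul_mul (A + B) (A - B) hl
  have hc : 0 < Int.gcd ((A + B) * (A - B)) l :=
    Int.gcd_pos_of_ne_zero_right _ (by exact_mod_cast hl)
  have hsq : l ^ 2 / Int.gcd ((A + B) * (A - B)) l
      = l / Int.gcd (A + B) l * (l / Int.gcd (A - B) l) * q := by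
    refine Nat.div_eq_of_eq_mul_left hc ?_
    rw [mul_assoc, mul_comm q, ← hq, Nat.div_mul_div_comm (hdvd _) (hdvd _),
      Nat.div_mul_cancel (Nat.mul_dvd_mul (hdvd _) (hdvd _)), sq]
  rcases (Nat.dvd_prime Nat.prime_two).mp (hq_dvd.trans (gcd_gcd_add_gcd_sub_dvd_two hcop))
    with rfl | rfl
  · rw [mul_one] at hq hsq
    have hl_dvd : l ∣ l / Int.gcd (A + B) l * (l / Int.gcd (A - B) l) :=
      Nat.dvd_div_mul_div (hdvd _) (hdvd _) (hq ▸ hdvd _)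
    exact ⟨fun _ ↦ hsq, fun h ↦ absurd ((Nat.div_dvd_of_dvd (hdvd B)).trans hl_dvd) h⟩
  · have h2 : 2 ∣ Int.gcd (A + B) l := hq_dvd.trans (Nat.gcd_dvd_left _ _)
    have hndvd := Nat.not_div_dvd_div_mul_div hl (hdvd _) (hdvd _) (hdvd _) (hdvd B) hq
      (Int.not_two_mul_gcd_mul_dvd hl hq) (not_two_dvd_gcd_of_two_dvd_gcd_add hcop h2)
    exact ⟨fun h ↦ absurd h hndvd, fun _ ↦ hsq.trans (mul_comm _ _)⟩

end

theorem stmt10_general {K : Type*} [Field K] (α β : Kˣ)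
    (hoα : 0 < orderOf α) (hoβ : 0 < orderOf β)
    (g : Kˣ) (hg : orderOf g = Nat.lcm (orderOf α) (orderOf β))
    (A B : ℤ) (hA : α = g ^ A) (hB : β = g ^ B) :
    (orderOf β ∣ orderOf (α * β) * orderOf (α * β⁻¹) →
      Nat.lcm (orderOf α) (orderOf β) ^ 2 /
          Int.gcd (A ^ 2 - B ^ 2) (Nat.lcm (orderOf α) (orderOf β)) =
        orderOf (α * β) * orderOf (α * β⁻¹)) ∧
    (¬ orderOf β ∣ orderOf (α * β) * orderOf (α * β⁻¹) →
      Nat.lcm (orderOf α) (orderOf β) ^ 2 /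
          Int.gcd (A ^ 2 - B ^ 2) (Nat.lcm (orderOf α) (orderOf β)) =
        2 * (orderOf (α * β) * orderOf (α * β⁻¹))) := by
  generalize hl_def : Nat.lcm (orderOf α) (orderOf β) = l at hg ⊢
  have hl : l ≠ 0 := hl_def ▸ Nat.lcm_ne_zero hoα.ne' hoβ.ne'
  have hord (X : ℤ) : orderOf (g ^ X) = l / Int.gcd X l := by
    rw [(orderOf_pos_iff.mp (hg ▸ Nat.pos_of_ne_zero hl)).orderOf_zpow, hg]
  have hdvd (X : ℤ) : Int.gcd X l ∣ l := Int.gcd_dvd_natAbs_right X l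
  have hcop : (Int.gcd A l).Coprime (Int.gcd B l) :=
    Nat.coprime_of_lcm_div_div_eq hl (hdvd A) (hdvd B) <| by
      rw [← hord, ← hord, ← hA, ← hB, hl_def]
  rw [hA, hB, ← zpow_add, ← zpow_neg, ← zpow_add, ← sub_eq_add_neg, hord, hord, hord]
  exact sq_div_gcd_sq_sub_sq hl hcop

/-- Theorem 4.2 of the paper, via [Case analysis in §4.2]. Let
`α, β ∈ K*` be roots of unity with `α ≠ β` and `α ≠ β⁻¹`; set `m = ord(α)`,
`n = ord(β)`, `l = lcm(m,n)`, let `g ∈ K*` with `ord(g) = l` and `α = g^A`,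
`β = g^B`. Then `l²/gcd(A² − B², l)` equals `ord(αβ)·ord(αβ⁻¹)` if
`n ∣ ord(αβ)·ord(αβ⁻¹)`, and equals `2·ord(αβ)·ord(αβ⁻¹)` otherwise. (This
quantity is the PI degree of `M₂(α,β)`.) -/
theorem stmt10 {K : Type*} [Field K] (α β : Kˣ)
    (hoα : 0 < orderOf α) (hoβ : 0 < orderOf β)
    (hne : α ≠ β) (hne' : α ≠ β⁻¹)
    (g : Kˣ) (hg : orderOf g = Nat.lcm (orderOf α) (orderOf β))
    (A B : ℤ) (hA : α = g ^ A) (hB : β = g ^ B) :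
    (orderOf β ∣ orderOf (α * β) * orderOf (α * β⁻¹) →
      Nat.lcm (orderOf α) (orderOf β) ^ 2 /
          Int.gcd (A ^ 2 - B ^ 2) (Nat.lcm (orderOf α) (orderOf β)) =
        orderOf (α * β) * orderOf (α * β⁻¹)) ∧
    (¬ orderOf β ∣ orderOf (α * β) * orderOf (α * β⁻¹) →
      Nat.lcm (orderOf α) (orderOf β) ^ 2 /
          Int.gcd (A ^ 2 - B ^ 2) (Nat.lcm (orderOf α) (orderOf β)) =
        2 * (orderOf (α * β) * orderOf (α * β⁻¹))) :=
  stmt10_general α β hoα hoβ g hg A B hA hB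
end

section
/- For every μ = (μ₁,μ₂,μ₃) ∈ (K*)³, the stated formulas define a right M₂(α,β)-module structure on V₂(μ), and V₂(μ) is a simple M₂(α,β)-module of K-dimension l₁·l₂. -/
/-!
The generators act on the basis `e(a,b)`, indexed by `ZMod l₁ × ZMod l₂`, as weighted shifts
`e_j ↦ c(j) e_(j+v)`. Products of weighted shifts are weighted shifts, so each defining relation
of `M₂(α,β)` becomes an identity between weights, which only needs care at the wrap-around
indices `a = 0`, `a = l₁ - 1`.

For irreducibility, `X₁₂X₂₁`, `X₁₁X₂₂` and `X₂₁^l₂` act diagonally, with eigenvalues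
`μ₃(αβ)^a(α⁻¹β)^b`, `μ₃α⁻¹(α⁻¹β)^b((αβ)^a - 1)` and `(μ₂α^a)^l₂`, and these separate the basis
vectors; this is where the choice of `l₁` enters. The functions whose multiplication preserves a
submodule form an algebra, and an algebra of functions on a finite set that separates points
contains every indicator, so a nonzero submodule contains some `e(a,b)`. Finally `X₂₁` and `X₂₂`
send `e(a,b)` to nonzero multiples of `e(a,b+1)` and `e(a+1,b)`, which reach every basis vector.
-/

noncomputable section

open MulOpposite

variable {K : Type*} [Field K]

/-- `l₂ := ord(αβ⁻¹)`. -/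
def l2 (α β : K) : ℕ := orderOf (α * β⁻¹)

open Classical in
/-- `l₁ := ord(αβ)` if `ord(β) ∣ ord(αβ)·ord(αβ⁻¹)`, and `l₁ := 2·ord(αβ)` otherwise. -/
def l1 (α β : K) : ℕ :=
  if orderOf β ∣ orderOf (α * β) * orderOf (α * β⁻¹) then orderOf (α * β)
  else 2 * orderOf (α * β)

/-- The underlying vector space of the modules `V₁(μ)` and `V₂(μ)`. -/
abbrev V12 (α β : K) : Type _ := (ZMod (l1 α β) × ZMod (l2 α β)) → K

/-- The underlying vector space of the module `V₃(μ)`. -/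
abbrev V3 (α β : K) : Type _ := (ZMod (orderOf (α * β)) × ZMod (l2 α β)) → K

/-- The basis vectors `e(a,b)` of `V₁(μ)` and `V₂(μ)`. -/
def e12 (α β : K) (a : ZMod (l1 α β)) (b : ZMod (l2 α β)) : V12 α β := Pi.single (a, b) 1

/-- The basis vectors `e(a,b)` of `V₃(μ)`. -/
def e3 (α β : K) (a : ZMod (orderOf (α * β))) (b : ZMod (l2 α β)) : V3 α β := Pi.single (a, b) 1

/-- `ρ` is the representation of `M₂(α,β)` on `V₁(μ₁,μ₂,μ₃,μ₄)` (a right module,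
presented as a `K`-algebra map from the opposite algebra to endomorphisms),
given on the basis `e(a,b)`, `0 ≤ a ≤ l₁−1`, `0 ≤ b ≤ l₂−1`, by the formulas:
`e(a,b)X₁₁ = μ₁β^b e(a⊕1,b)`;
`e(a,b)X₁₂ = μ₂⁻¹μ₃(α⁻¹β)^b(αβ)^{−a} e(a,b−1)` if `b ≠ 0`,
  `e(a,0)X₁₂ = μ₂⁻¹μ₃β^{al₂}(αβ)^{−a} e(a,l₂−1)`;
`e(a,b)X₂₁ = μ₂ e(a,b+1)` if `b ≠ l₂−1`, `e(a,l₂−1)X₂₁ = μ₂β^{−al₂} e(a,0)`;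
`e(a,b)X₂₂ = μ₁⁻¹α^{−b}(μ₄ + β(αβ)^{−a}μ₃) e(a⊖1,b)`,
with index arithmetic modulo `l₁` (first slot) and `l₂` (second slot). -/
def IsV1Rep (α β μ₁ μ₂ μ₃ μ₄ : K)
    (ρ : (QM α β)ᵐᵒᵖ →ₐ[K] Module.End K (V12 α β)) : Prop :=
  (∀ a b, ρ (op (X11 α β)) (e12 α β a b) = (μ₁ * β ^ b.val) • e12 α β (a + 1) b) ∧
  (∀ a b, ρ (op (X12 α β)) (e12 α β a b) =
    (if b = 0 then μ₂⁻¹ * μ₃ * β ^ (a.val * l2 α β) * ((α * β) ^ a.val)⁻¹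
      else μ₂⁻¹ * μ₃ * (α⁻¹ * β) ^ b.val * ((α * β) ^ a.val)⁻¹) • e12 α β a (b - 1)) ∧
  (∀ a b, ρ (op (X21 α β)) (e12 α β a b) =
    (if b.val = l2 α β - 1 then μ₂ * (β ^ (a.val * l2 α β))⁻¹ else μ₂) • e12 α β a (b + 1)) ∧
  (∀ a b, ρ (op (X22 α β)) (e12 α β a b) =
    (μ₁⁻¹ * (α ^ b.val)⁻¹ * (μ₄ + β * ((α * β) ^ a.val)⁻¹ * μ₃)) • e12 α β (a - 1) b)

/-- `ρ` is the representation of `M₂(α,β)` on `V₂(μ₁,μ₂,μ₃)` given on the basis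
`e(a,b)` by:
`e(a,b)X₁₁ = μ₁⁻¹μ₃α⁻¹(α⁻¹β)^b((αβ)^a − 1) e(a−1,b)` if `a ≠ 0`, `e(0,b)X₁₁ = 0`;
`e(a,b)X₁₂ = μ₂⁻¹μ₃β^a(α⁻¹β)^b e(a,b∔(−1))`;
`e(a,b)X₂₁ = μ₂α^a e(a,b∔1)`;
`e(a,b)X₂₂ = μ₁ e(a+1,b)` if `a ≠ l₁−1`, `e(l₁−1,b)X₂₂ = μ₁α^{−bl₁} e(0,b)`. -/
def IsV2Rep (α β μ₁ μ₂ μ₃ : K)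
    (ρ : (QM α β)ᵐᵒᵖ →ₐ[K] Module.End K (V12 α β)) : Prop :=
  (∀ a b, ρ (op (X11 α β)) (e12 α β a b) =
    (if a = 0 then 0
      else μ₁⁻¹ * μ₃ * α⁻¹ * (α⁻¹ * β) ^ b.val * ((α * β) ^ a.val - 1)) • e12 α β (a - 1) b) ∧
  (∀ a b, ρ (op (X12 α β)) (e12 α β a b) =
    (μ₂⁻¹ * μ₃ * β ^ a.val * (α⁻¹ * β) ^ b.val) • e12 α β a (b - 1)) ∧
  (∀ a b, ρ (op (X21 α β)) (e12 α β a b) = (μ₂ * α ^ a.val) • e12 α β a (b + 1)) ∧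
  (∀ a b, ρ (op (X22 α β)) (e12 α β a b) =
    (if a.val = l1 α β - 1 then μ₁ * (α ^ (b.val * l1 α β))⁻¹ else μ₁) • e12 α β (a + 1) b)

/-- `ρ` is the representation of `M₂(α,β)` on `V₃(μ₁,μ₂)` given on the basis
`e(a,b)`, `0 ≤ a ≤ ord(αβ)−1`, `0 ≤ b ≤ l₂−1`, by:
`e(a,b)X₁₁ = μ₂α⁻¹(α⁻¹β)^b((αβ)^a − 1) e(a−1,b)` if `a ≠ 0`, `e(0,b)X₁₁ = 0`;
`e(a,b)X₁₂ = μ₁⁻¹μ₂β^a(α⁻¹β)^b e(a,b∔(−1))`;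
`e(a,b)X₂₁ = μ₁α^a e(a,b∔1)`;
`e(a,b)X₂₂ = e(a+1,b)` if `a ≠ ord(αβ)−1`, `e(ord(αβ)−1,b)X₂₂ = 0`. -/
def IsV3Rep (α β μ₁ μ₂ : K)
    (ρ : (QM α β)ᵐᵒᵖ →ₐ[K] Module.End K (V3 α β)) : Prop :=
  (∀ a b, ρ (op (X11 α β)) (e3 α β a b) =
    (if a = 0 then 0
      else μ₂ * α⁻¹ * (α⁻¹ * β) ^ b.val * ((α * β) ^ a.val - 1)) • e3 α β (a - 1) b) ∧
  (∀ a b, ρ (op (X12 α β)) (e3 α β a b) =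
    (μ₁⁻¹ * μ₂ * β ^ a.val * (α⁻¹ * β) ^ b.val) • e3 α β a (b - 1)) ∧
  (∀ a b, ρ (op (X21 α β)) (e3 α β a b) = (μ₁ * α ^ a.val) • e3 α β a (b + 1)) ∧
  (∀ a b, ρ (op (X22 α β)) (e3 α β a b) =
    if a.val = orderOf (α * β) - 1 then 0 else e3 α β (a + 1) b)

section WeightedShift

variable {G R : Type*} [AddCommGroup G] [CommSemiring R]

def weightedShift (c : G → R) (v : G) : Module.End R (G → R) where
  toFun f p := c (p - v) * f (p - v)
  map_add' f g := by funext p; simp [mul_add]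
  map_smul' r f := by funext p; simp [mul_left_comm]

@[simp]
theorem weightedShift_apply (c : G → R) (v : G) (f : G → R) (p : G) :
    weightedShift c v f p = c (p - v) * f (p - v) := rfl

theorem weightedShift_single [DecidableEq G] (c : G → R) (v j : G) :
    weightedShift c v (Pi.single j 1) = c j • Pi.single (j + v) 1 := by
  funext p
  by_cases hp : p = j + v
  · simp [hp]
  · simp [hp, sub_eq_iff_eq_add]

theorem weightedShift_mul (c d : G → R) (v w : G) :
    weightedShift d w * weightedShift c v =
      weightedShift (fun j => c j * d (j + v)) (v + w) := by
  ext f p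
  simp only [Module.End.mul_apply, weightedShift_apply]
  rw [show p - (v + w) + v = p - w by abel, show p - (v + w) = p - w - v by abel]
  ring

theorem smul_weightedShift (k : R) (c : G → R) (v : G) :
    k • weightedShift c v = weightedShift (k • c) v := by
  ext f p
  simp [mul_assoc]

theorem weightedShift_add (c d : G → R) (v : G) :
    weightedShift c v + weightedShift d v = weightedShift (c + d) v := by
  ext f p
  simp [add_mul]

theorem weightedShift_zero_apply (c f : G → R) : weightedShift c 0 f = c * f := by
  funext p
  simp

theorem weightedShift_pow (c : G → R) (v : G) (n : ℕ) :
    weightedShift c v ^ n =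
      weightedShift (fun j => ∏ k ∈ Finset.range n, c (j + k • v)) (n • v) := by
  induction n with
  | zero => ext f p; simp
  | succ n ih =>
    rw [pow_succ, ih, weightedShift_mul, succ_nsmul']
    congr 1
    funext j
    rw [Finset.prod_range_succ']
    simp [add_assoc, ← succ_nsmul', mul_comm]

theorem weightedShift_mul_eq_smul_mul {c d : G → R} {v w : G} (k : R)
    (h : ∀ j, c j * d (j + v) = k * (d j * c (j + w))) :
    weightedShift d w * weightedShift c v = k • (weightedShift c v * weightedShift d w) := by
  rw [weightedShift_mul, weightedShift_mul, smul_weightedShift, add_comm v w]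
  congr 1
  funext j
  exact h j

end WeightedShift

theorem Subalgebra.single_one_mem_of_separates {ι : Type*} [Fintype ι] [DecidableEq ι]
    {S : Subalgebra K (ι → K)} (hS : ∀ p q, p ≠ q → ∃ d ∈ S, d p ≠ d q) (p : ι) :
    Pi.single p 1 ∈ S := by
  choose! d hdS hd using hS p
  -- Lagrange interpolation: each factor is `1` at `p` and vanishes at `q`.
  let e : ι → ι → K := fun q => (d q p - d q q)⁻¹ • (d q - algebraMap K (ι → K) (d q q))
  have he : ∀ q ∈ Finset.univ.erase p, e q ∈ S := fun q hq =>
    S.smul_mem (S.sub_mem (hdS q (Finset.ne_of_mem_erase hq).symm) (S.algebraMap_mem _)) _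
  convert S.prod_mem he using 1
  funext r
  rw [Finset.prod_apply]
  by_cases hr : r = p
  · subst hr
    rw [Pi.single_eq_same, eq_comm]
    refine Finset.prod_eq_one fun q hq => ?_
    simp [e, inv_mul_cancel₀ (sub_ne_zero.mpr (hd q (Finset.ne_of_mem_erase hq).symm))]
  · rw [Pi.single_eq_of_ne hr, eq_comm]
    exact Finset.prod_eq_zero (Finset.mem_erase.mpr ⟨hr, Finset.mem_univ r⟩) (by simp [e])

namespace Submodule

variable {ι : Type*}

def multipliers (W : Submodule K (ι → K)) : Subalgebra K (ι → K) where
  carrier := {d | ∀ f ∈ W, d * f ∈ W}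
  mul_mem' {d e} hd he f hf := by simpa only [mul_assoc] using hd _ (he f hf)
  add_mem' {d e} hd he f hf := by simpa only [add_mul] using W.add_mem (hd f hf) (he f hf)
  algebraMap_mem' r f hf := by
    simpa only [Algebra.algebraMap_eq_smul_one, smul_mul_assoc, one_mul] using W.smul_mem r hf

theorem mem_multipliers {W : Submodule K (ι → K)} {d : ι → K} :
    d ∈ W.multipliers ↔ ∀ f ∈ W, d * f ∈ W := Iff.rfl

variable {G : Type*} [DecidableEq G] {W : Submodule K (G → K)}

theorem exists_single_one_mem [Fintype G] (hW : W ≠ ⊥)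
    (hsep : ∀ p q, p ≠ q → ∃ d ∈ W.multipliers, d p ≠ d q) : ∃ p, Pi.single p 1 ∈ W := by
  obtain ⟨f, hf, hf0⟩ := W.ne_bot_iff.mp hW
  obtain ⟨p, hp⟩ : ∃ p, f p ≠ 0 := Function.ne_iff.mp hf0
  refine ⟨p, ?_⟩
  have h := W.smul_mem (f p)⁻¹ (Subalgebra.single_one_mem_of_separates hsep p f hf)
  convert h using 1
  funext r
  by_cases hr : r = p
  · subst hr
    simp [inv_mul_cancel₀ hp]
  · simp [hr]

variable [AddCommGroup G]

theorem single_one_add_mem {c : G → K} {v : G} (hc : ∀ j, c j ≠ 0)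
    (hcW : ∀ f ∈ W, weightedShift c v f ∈ W) {j : G} (hj : Pi.single j 1 ∈ W) :
    Pi.single (j + v) 1 ∈ W := by
  have h := W.smul_mem (c j)⁻¹ (hcW _ hj)
  rwa [weightedShift_single, smul_smul, inv_mul_cancel₀ (hc j), one_smul] at h

theorem eq_top_of_single_one_mem [Finite G] {S : Set G} (hS : AddSubmonoid.closure S = ⊤)
    (hshift : ∀ v ∈ S, ∃ c : G → K, (∀ j, c j ≠ 0) ∧ ∀ f ∈ W, weightedShift c v f ∈ W)
    {j : G} (hj : Pi.single j 1 ∈ W) : W = ⊤ := by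
  have hadd : ∀ g, ∀ j, Pi.single j 1 ∈ W → Pi.single (j + g) 1 ∈ W := by
    intro g
    induction (hS ▸ AddSubmonoid.mem_top g : g ∈ AddSubmonoid.closure S) using
      AddSubmonoid.closure_induction with
    | mem v hv =>
      obtain ⟨c, hc, hcW⟩ := hshift v hv
      exact fun j hj => single_one_add_mem hc hcW hj
    | zero => simp
    | add g h _ _ hg hh => exact fun j hj => by simpa [add_assoc] using hh _ (hg j hj)
  rw [eq_top_iff, ← (Pi.basisFun K G).span_eq, span_le]
  rintro _ ⟨p, rfl⟩
  simpa using hadd (p - j) j hj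

theorem eq_bot_or_eq_top_of_separates [Fintype G] {S : Set G} (hS : AddSubmonoid.closure S = ⊤)
    (hsep : ∀ p q, p ≠ q → ∃ d ∈ W.multipliers, d p ≠ d q)
    (hshift : ∀ v ∈ S, ∃ c : G → K, (∀ j, c j ≠ 0) ∧ ∀ f ∈ W, weightedShift c v f ∈ W) :
    W = ⊥ ∨ W = ⊤ := by
  refine or_iff_not_imp_left.mpr fun hW => ?_
  obtain ⟨j, hj⟩ := exists_single_one_mem hW hsep
  exact eq_top_of_single_one_mem hS hshift hj

end Submodule

namespace ZMod

theorem addSubmonoid_closure_pair_eq_top (m n : ℕ) [NeZero m] [NeZero n] :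
    AddSubmonoid.closure {((1 : ZMod m), (0 : ZMod n)), (0, 1)} = ⊤ := by
  refine eq_top_iff.mpr fun p _ => ?_
  have hp : p = p.1.val • ((1 : ZMod m), (0 : ZMod n)) + p.2.val • (0, 1) := by
    ext <;> simp
  rw [hp]
  exact add_mem (nsmul_mem (AddSubmonoid.subset_closure (by simp)) _)
    (nsmul_mem (AddSubmonoid.subset_closure (by simp)) _)

variable {n : ℕ} [NeZero n]

theorem val_eq_sub_one_iff {a : ZMod n} : a.val = n - 1 ↔ a + 1 = 0 := by
  have hcast : a + 1 = ((a.val + 1 : ℕ) : ZMod n) := by push_cast [natCast_zmod_val]; rfl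
  have hlt := a.val_lt
  rw [hcast, natCast_eq_zero_iff]
  constructor
  · intro h
    rw [h, Nat.sub_add_cancel (by omega)]
  · intro h
    have := Nat.eq_of_dvd_of_lt_two_mul (by omega) h (by omega)
    omega

theorem val_add_one_of_ne_zero {a : ZMod n} (h : a + 1 ≠ 0) : (a + 1).val = a.val + 1 := by
  have hcast : a + 1 = ((a.val + 1 : ℕ) : ZMod n) := by push_cast [natCast_zmod_val]; rfl
  have hne := val_eq_sub_one_iff.not.mpr h
  have hlt := a.val_lt
  rw [hcast, val_natCast, Nat.mod_eq_of_lt (by omega)]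

theorem val_sub_one_add_one {a : ZMod n} (h : a ≠ 0) : (a - 1).val + 1 = a.val := by
  rw [← val_add_one_of_ne_zero (by simpa using h), sub_add_cancel]

variable {M : Type*} [Monoid M] {ξ : M}

theorem pow_val_add (hξ : ξ ^ n = 1) (a b : ZMod n) :
    ξ ^ (a + b).val = ξ ^ a.val * ξ ^ b.val := by
  rw [val_add, ← pow_eq_pow_mod _ hξ, pow_add]

theorem pow_val_add_one (hξ : ξ ^ n = 1) (a : ZMod n) : ξ ^ (a + 1).val = ξ ^ a.val * ξ := by
  rw [pow_val_add hξ, val_one_eq_one_mod, ← pow_eq_pow_mod _ hξ, pow_one]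

theorem pow_val_sub_one_mul (hξ : ξ ^ n = 1) (a : ZMod n) : ξ ^ (a - 1).val * ξ = ξ ^ a.val := by
  rw [← pow_val_add_one hξ, sub_add_cancel]

theorem pow_val_injective (hn : n ≤ orderOf ξ) : Function.Injective fun a : ZMod n => ξ ^ a.val :=
  fun a b h => val_injective n <|
    pow_injOn_Iio_orderOf (a.val_lt.trans_le hn) (b.val_lt.trans_le hn) h

end ZMod

section RootsOfUnity

variable {α β : K}

theorem orderOf_inv₀ (x : K) : orderOf x⁻¹ = orderOf x := by
  simp [orderOf_eq_orderOf_iff, inv_pow]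

theorem l2_eq_orderOf : l2 α β = orderOf (α⁻¹ * β) := by
  rw [l2, ← orderOf_inv₀, mul_inv, inv_inv]

theorem orderOf_mul_pos (hoα : 0 < orderOf α) (hoβ : 0 < orderOf β) : 0 < orderOf (α * β) :=
  orderOf_pos_iff.mpr ((orderOf_pos_iff.mp hoα).mul (orderOf_pos_iff.mp hoβ))

theorem l1_pos (hoα : 0 < orderOf α) (hoβ : 0 < orderOf β) : 0 < l1 α β := by
  have := orderOf_mul_pos hoα hoβ
  unfold l1
  split_ifs <;> omega

theorem l2_pos (hoα : 0 < orderOf α) (hoβ : 0 < orderOf β) : 0 < l2 α β :=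
  orderOf_mul_pos hoα (by rwa [orderOf_inv₀])

theorem pow_l1 : (α * β) ^ l1 α β = 1 := by
  rw [← orderOf_dvd_iff_pow_eq_one, l1]
  split_ifs <;> simp

theorem pow_l2 : (α⁻¹ * β) ^ l2 α β = 1 := by
  rw [l2_eq_orderOf, pow_orderOf_eq_one]

theorem pow_l1_mul_l2 (hβ : β ≠ 0) : α ^ (l1 α β * l2 α β) = 1 := by
  have hm : (α * β) ^ orderOf (α * β) = 1 := pow_orderOf_eq_one _
  unfold l1
  split_ifs with h
  · have h1 : (α * β) ^ (orderOf (α * β) * l2 α β) = 1 := by rw [pow_mul, hm, one_pow]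
    rw [l2] at h1 ⊢
    rwa [mul_pow, orderOf_dvd_iff_pow_eq_one.mp h, mul_one] at h1
  · have hsq : α ^ 2 = (α * β) * (α * β⁻¹) := by field_simp
    rw [mul_assoc, pow_mul, hsq, mul_pow, pow_mul, hm, one_pow, one_mul, pow_mul', l2,
      pow_orderOf_eq_one, one_pow]

/-- The choice of `l₁` makes `a ↦ ((αβ)^a, α^(a l₂))` injective on `ZMod l₁`. -/
theorem l1_le_orderOf [NeZero (l1 α β)] (hβ : β ≠ 0) :
    l1 α β ≤ orderOf (α * β, α ^ l2 α β) := by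
  set y := (α * β, α ^ l2 α β)
  have hy : y ^ l1 α β = 1 := by
    simp only [y, Prod.pow_mk, pow_l1, ← pow_mul, mul_comm (l2 α β), pow_l1_mul_l2 hβ,
      Prod.mk_one_one]
  have hpos : 0 < orderOf y :=
    orderOf_pos_iff.mpr (isOfFinOrder_iff_pow_eq_one.mpr ⟨_, NeZero.pos _, hy⟩)
  have hdvd : orderOf (α * β) ∣ orderOf y :=
    orderOf_dvd_of_pow_eq_one (congrArg Prod.fst (pow_orderOf_eq_one y))
  unfold l1
  split_ifs with h
  · exact Nat.le_of_dvd hpos hdvd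
  · obtain ⟨k, hk⟩ := hdvd
    have hk1 : k ≠ 1 := by
      rintro rfl
      have hα : α ^ (l2 α β * orderOf (α * β)) = 1 := by
        simpa [y, hk, ← pow_mul] using congrArg Prod.snd (pow_orderOf_eq_one y)
      have h1 : (α * β) ^ (orderOf (α * β) * l2 α β) = 1 := by
        rw [pow_mul, pow_orderOf_eq_one, one_pow]
      rw [mul_pow, mul_comm (orderOf _), hα, one_mul] at h1
      exact h (orderOf_dvd_of_pow_eq_one (by rwa [mul_comm] at h1))
    have hk0 : k ≠ 0 := by rintro rfl; omega
    rw [hk, mul_comm 2]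
    exact Nat.mul_le_mul_left _ (by omega)

end RootsOfUnity

namespace V2

variable (α β μ₁ μ₂ μ₃ : K)

def coeff11 (p : ZMod (l1 α β) × ZMod (l2 α β)) : K :=
  if p.1 = 0 then 0 else μ₁⁻¹ * μ₃ * α⁻¹ * (α⁻¹ * β) ^ p.2.val * ((α * β) ^ p.1.val - 1)

def coeff12 (p : ZMod (l1 α β) × ZMod (l2 α β)) : K :=
  μ₂⁻¹ * μ₃ * β ^ p.1.val * (α⁻¹ * β) ^ p.2.val

def coeff21 (p : ZMod (l1 α β) × ZMod (l2 α β)) : K := μ₂ * α ^ p.1.val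

def coeff22 (p : ZMod (l1 α β) × ZMod (l2 α β)) : K :=
  if p.1.val = l1 α β - 1 then μ₁ * (α ^ (p.2.val * l1 α β))⁻¹ else μ₁

def x11 : Module.End K (V12 α β) := weightedShift (coeff11 α β μ₁ μ₃) (-1, 0)

def x12 : Module.End K (V12 α β) := weightedShift (coeff12 α β μ₂ μ₃) (0, -1)

def x21 : Module.End K (V12 α β) := weightedShift (coeff21 α β μ₂) (0, 1)

def x22 : Module.End K (V12 α β) := weightedShift (coeff22 α β μ₁) (1, 0)

variable {α β μ₁ μ₂ μ₃}

theorem coeff22_mul_coeff11_add_one [NeZero (l1 α β)] (a : ZMod (l1 α β)) (b : ZMod (l2 α β)) :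
    coeff22 α β μ₁ (a, b) * coeff11 α β μ₁ μ₃ (a + 1, b) = μ₁ * coeff11 α β μ₁ μ₃ (a + 1, b) := by
  by_cases h : a + 1 = 0
  · simp [coeff11, h]
  · simp [coeff22, ZMod.val_eq_sub_one_iff, h]

theorem mul_coeff11 (hμ₁ : μ₁ ≠ 0) (p : ZMod (l1 α β) × ZMod (l2 α β)) :
    μ₁ * coeff11 α β μ₁ μ₃ p = μ₃ * α⁻¹ * (α⁻¹ * β) ^ p.2.val * ((α * β) ^ p.1.val - 1) := by
  by_cases h : p.1 = 0
  · simp [coeff11, h]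
  · simp only [coeff11, if_neg h]
    field_simp

theorem x21_mul_x12 (hμ₂ : μ₂ ≠ 0) :
    x21 α β μ₂ * x12 α β μ₂ μ₃ =
      weightedShift (fun p => μ₃ * ((α * β) ^ p.1.val * (α⁻¹ * β) ^ p.2.val)) 0 := by
  rw [x21, x12, weightedShift_mul]
  congr 1
  · funext p
    simp only [coeff12, coeff21, Prod.fst_add, add_zero, mul_pow]
    field_simp
  · simp

theorem x22_mul_x11 [NeZero (l1 α β)] (hμ₁ : μ₁ ≠ 0) :
    x22 α β μ₁ * x11 α β μ₁ μ₃ = weightedShift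
      (fun p => μ₃ * α⁻¹ * (α⁻¹ * β) ^ p.2.val * ((α * β) ^ p.1.val - 1)) 0 := by
  rw [x22, x11, weightedShift_mul]
  congr 1
  · funext ⟨a, b⟩
    have h := coeff22_mul_coeff11_add_one (μ₁ := μ₁) (μ₃ := μ₃) (a - 1) b
    rw [sub_add_cancel] at h
    rw [Prod.mk_add_mk, add_zero, ← sub_eq_add_neg, mul_comm, h, mul_coeff11 hμ₁]
  · simp

theorem x11_mul_x22 [NeZero (l1 α β)] (hμ₁ : μ₁ ≠ 0) :
    x11 α β μ₁ μ₃ * x22 α β μ₁ = weightedShift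
      (fun p => μ₃ * α⁻¹ * (α⁻¹ * β) ^ p.2.val * ((α * β) ^ p.1.val * (α * β) - 1)) 0 := by
  rw [x22, x11, weightedShift_mul]
  congr 1
  · funext ⟨a, b⟩
    rw [Prod.mk_add_mk, add_zero, coeff22_mul_coeff11_add_one, mul_coeff11 hμ₁,
      ZMod.pow_val_add_one pow_l1]
  · simp

theorem x21_pow_l2 :
    x21 α β μ₂ ^ l2 α β = weightedShift (fun p => (μ₂ * α ^ p.1.val) ^ l2 α β) 0 := by
  rw [x21, weightedShift_pow]
  congr 1
  · funext p
    simp [coeff21]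
  · ext <;> simp

-- A right action reverses products: `X₁₂X₁₁ = αX₁₁X₁₂` reads `x11 * x12 = α • (x12 * x11)`.
theorem x11_mul_x12 [NeZero (l1 α β)] [NeZero (l2 α β)] (hα : α ≠ 0) :
    x11 α β μ₁ μ₃ * x12 α β μ₂ μ₃ = α • (x12 α β μ₂ μ₃ * x11 α β μ₁ μ₃) := by
  refine weightedShift_mul_eq_smul_mul _ fun ⟨a, b⟩ => ?_
  simp only [Prod.mk_add_mk, add_zero, ← sub_eq_add_neg, coeff11, coeff12]
  by_cases ha : a = 0
  · simp [ha]
  · rw [if_neg ha, if_neg ha, ← ZMod.pow_val_sub_one_mul pow_l2 b,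
      ← ZMod.val_sub_one_add_one ha, pow_succ]
    field_simp

theorem x11_mul_x21 [NeZero (l1 α β)] [NeZero (l2 α β)] (hα : α ≠ 0) :
    x11 α β μ₁ μ₃ * x21 α β μ₂ = β • (x21 α β μ₂ * x11 α β μ₁ μ₃) := by
  refine weightedShift_mul_eq_smul_mul _ fun ⟨a, b⟩ => ?_
  simp only [Prod.mk_add_mk, add_zero, ← sub_eq_add_neg, coeff11, coeff21]
  by_cases ha : a = 0
  · simp [ha]
  · rw [if_neg ha, if_neg ha, ZMod.pow_val_add_one pow_l2, ← ZMod.val_sub_one_add_one ha,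
      pow_succ]
    field_simp

theorem x21_mul_x22 [NeZero (l1 α β)] [NeZero (l2 α β)] (hα : α ≠ 0) (hβ : β ≠ 0) :
    x21 α β μ₂ * x22 α β μ₁ = α • (x22 α β μ₁ * x21 α β μ₂) := by
  refine weightedShift_mul_eq_smul_mul _ fun ⟨a, b⟩ => ?_
  simp only [Prod.mk_add_mk, add_zero, coeff21, coeff22]
  by_cases ha : a + 1 = 0
  · have hv := ZMod.val_eq_sub_one_iff.mpr ha
    have hl : α ^ (l1 α β - 1) * α = α ^ l1 α β := by
      rw [← pow_succ, Nat.sub_add_cancel NeZero.one_le]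
    have hX : (α ^ l1 α β) ^ l2 α β = 1 := by rw [← pow_mul, pow_l1_mul_l2 hβ]
    rw [ha, ZMod.val_zero, if_pos hv, if_pos hv, hv, pow_mul', pow_mul',
      ZMod.pow_val_add_one hX, ← hl]
    field_simp
  · have hv := ZMod.val_eq_sub_one_iff.not.mpr ha
    rw [if_neg hv, if_neg hv, ZMod.val_add_one_of_ne_zero ha, pow_succ]
    ring

theorem x12_mul_x22 [NeZero (l1 α β)] [NeZero (l2 α β)] (hα : α ≠ 0) (hβ : β ≠ 0) :
    x12 α β μ₂ μ₃ * x22 α β μ₁ = β • (x22 α β μ₁ * x12 α β μ₂ μ₃) := by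
  refine weightedShift_mul_eq_smul_mul _ fun ⟨a, b⟩ => ?_
  simp only [Prod.mk_add_mk, add_zero, ← sub_eq_add_neg, coeff12, coeff22]
  by_cases ha : a + 1 = 0
  · have hv := ZMod.val_eq_sub_one_iff.mpr ha
    have hl : β ^ (l1 α β - 1) * β * α ^ l1 α β = 1 := by
      rw [← pow_succ, Nat.sub_add_cancel NeZero.one_le, ← mul_pow, mul_comm, pow_l1]
    have hX : (α ^ l1 α β) ^ l2 α β = 1 := by rw [← pow_mul, pow_l1_mul_l2 hβ]
    rw [ha, ZMod.val_zero, if_pos hv, if_pos hv, hv, pow_mul', pow_mul',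
      ← ZMod.pow_val_sub_one_mul hX b]
    field_simp
    linear_combination (-(μ₁ * μ₃ / μ₂)) * hl
  · have hv := ZMod.val_eq_sub_one_iff.not.mpr ha
    rw [if_neg hv, if_neg hv, ZMod.val_add_one_of_ne_zero ha, pow_succ]
    ring

theorem x12_mul_x21 [NeZero (l2 α β)] (hα : α ≠ 0) :
    x12 α β μ₂ μ₃ * x21 α β μ₂ = (β * α⁻¹) • (x21 α β μ₂ * x12 α β μ₂ μ₃) := by
  refine weightedShift_mul_eq_smul_mul _ fun ⟨a, b⟩ => ?_
  simp only [Prod.mk_add_mk, add_zero, ← sub_eq_add_neg, coeff12, coeff21,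
    ZMod.pow_val_add_one pow_l2]
  field_simp

theorem x11_mul_x22_eq_x22_mul_x11_add [NeZero (l1 α β)] (hα : α ≠ 0) (hμ₁ : μ₁ ≠ 0) (hμ₂ : μ₂ ≠ 0) :
    x11 α β μ₁ μ₃ * x22 α β μ₁ =
      x22 α β μ₁ * x11 α β μ₁ μ₃ + (β - α⁻¹) • (x21 α β μ₂ * x12 α β μ₂ μ₃) := by
  rw [x11_mul_x22 hμ₁, x22_mul_x11 hμ₁, x21_mul_x12 hμ₂, smul_weightedShift, weightedShift_add]
  congr 1
  funext p
  simp only [Pi.add_apply, Pi.smul_apply, smul_eq_mul, mul_pow]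
  field_simp
  ring

variable (α β μ₁ μ₂ μ₃)

def lift : FreeAlgebra K (Fin 4) →ₐ[K] (Module.End K (V12 α β))ᵐᵒᵖ :=
  FreeAlgebra.lift K fun i =>
    op (![x11 α β μ₁ μ₃, x12 α β μ₂ μ₃, x21 α β μ₂, x22 α β μ₁] i)

variable {α β μ₁ μ₂ μ₃}

theorem lift_rel [NeZero (l1 α β)] [NeZero (l2 α β)] (hα : α ≠ 0) (hβ : β ≠ 0)
    (hμ₁ : μ₁ ≠ 0) (hμ₂ : μ₂ ≠ 0) ⦃x y : FreeAlgebra K (Fin 4)⦄ (h : QMRel α β x y) :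
    lift α β μ₁ μ₂ μ₃ x = lift α β μ₁ μ₂ μ₃ y := by
  apply unop_injective
  cases h <;> simp only [lift, map_mul, map_add, map_smul, FreeAlgebra.lift_ι_apply, unop_mul,
    unop_add, unop_smul, unop_op, Matrix.cons_val]
  · exact x11_mul_x12 hα
  · exact x11_mul_x21 hα
  · exact x21_mul_x22 hα hβ
  · exact x12_mul_x22 hα hβ
  · exact x12_mul_x21 hα
  · exact x11_mul_x22_eq_x22_mul_x11_add hα hμ₁ hμ₂

variable (α β μ₁ μ₂ μ₃)

def rep (h : ∀ ⦃x y⦄, QMRel α β x y → lift α β μ₁ μ₂ μ₃ x = lift α β μ₁ μ₂ μ₃ y) :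
    (QM α β)ᵐᵒᵖ →ₐ[K] Module.End K (V12 α β) :=
  AlgHom.opComm (RingQuot.liftAlgHom K ⟨lift α β μ₁ μ₂ μ₃, h⟩)

variable {α β μ₁ μ₂ μ₃}
variable (h : ∀ ⦃x y⦄, QMRel α β x y → lift α β μ₁ μ₂ μ₃ x = lift α β μ₁ μ₂ μ₃ y)

theorem rep_X11 : rep α β μ₁ μ₂ μ₃ h (op (X11 α β)) = x11 α β μ₁ μ₃ := by
  simp [rep, lift, X11]

theorem rep_X12 : rep α β μ₁ μ₂ μ₃ h (op (X12 α β)) = x12 α β μ₂ μ₃ := by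
  simp [rep, lift, X12]

theorem rep_X21 : rep α β μ₁ μ₂ μ₃ h (op (X21 α β)) = x21 α β μ₂ := by
  simp [rep, lift, X21]

theorem rep_X22 : rep α β μ₁ μ₂ μ₃ h (op (X22 α β)) = x22 α β μ₁ := by
  simp [rep, lift, X22]

theorem isV2Rep_rep [NeZero (l1 α β)] [NeZero (l2 α β)] :
    IsV2Rep α β μ₁ μ₂ μ₃ (rep α β μ₁ μ₂ μ₃ h) := by
  refine ⟨fun a b => ?_, fun a b => ?_, fun a b => ?_, fun a b => ?_⟩ <;>
    simp [rep_X11, rep_X12, rep_X21, rep_X22, x11, x12, x21, x22, e12, weightedShift_single,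
      sub_eq_add_neg, coeff11, coeff12, coeff21, coeff22]

theorem separates [NeZero (l1 α β)] [NeZero (l2 α β)] (hα : α ≠ 0) (hβ : β ≠ 0)
    (hμ₂ : μ₂ ≠ 0) (hμ₃ : μ₃ ≠ 0) {S : Subalgebra K (V12 α β)}
    (hlam : (fun p => μ₃ * ((α * β) ^ p.1.val * (α⁻¹ * β) ^ p.2.val)) ∈ S)
    (hnu : (fun p => μ₃ * α⁻¹ * (α⁻¹ * β) ^ p.2.val * ((α * β) ^ p.1.val - 1)) ∈ S)
    (hsig : (fun p => (μ₂ * α ^ p.1.val) ^ l2 α β) ∈ S) :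
    ∀ p q, p ≠ q → ∃ d ∈ S, d p ≠ d q := by
  rintro ⟨a, b⟩ ⟨a', b'⟩ hne
  by_contra! hS
  have hb : b = b' := by
    have hsub : ∀ x y : K, μ₃ * (x * y) - α * (μ₃ * α⁻¹ * y * (x - 1)) = μ₃ * y := by
      intro x y
      field_simp
      ring
    have h := hS _ (S.sub_mem hlam (S.smul_mem hnu α))
    simp only [Pi.sub_apply, Pi.smul_apply, smul_eq_mul, hsub] at h
    exact ZMod.pow_val_injective l2_eq_orderOf.le (mul_left_cancel₀ hμ₃ h)
  subst hb
  have ha : a = a' := by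
    have hq : (α⁻¹ * β) ^ b.val ≠ 0 := pow_ne_zero _ (mul_ne_zero (inv_ne_zero hα) hβ)
    have h1 := mul_right_cancel₀ hq (mul_left_cancel₀ hμ₃ (hS _ hlam))
    have h2 := hS _ hsig
    simp only [mul_pow, ← pow_mul] at h2
    rw [mul_comm a.val, mul_comm a'.val] at h2
    refine ZMod.pow_val_injective (l1_le_orderOf hβ) (Prod.ext h1 ?_)
    simpa only [Prod.pow_mk, ← pow_mul] using mul_left_cancel₀ (pow_ne_zero _ hμ₂) h2
  exact hne (by rw [ha])

theorem coeff21_ne_zero (hα : α ≠ 0) (hμ₂ : μ₂ ≠ 0) (p : ZMod (l1 α β) × ZMod (l2 α β)) :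
    coeff21 α β μ₂ p ≠ 0 :=
  mul_ne_zero hμ₂ (pow_ne_zero _ hα)

theorem coeff22_ne_zero (hα : α ≠ 0) (hμ₁ : μ₁ ≠ 0) (p : ZMod (l1 α β) × ZMod (l2 α β)) :
    coeff22 α β μ₁ p ≠ 0 := by
  unfold coeff22
  split_ifs
  · exact mul_ne_zero hμ₁ (inv_ne_zero (pow_ne_zero _ hα))
  · exact hμ₁

theorem rep_simple [NeZero (l1 α β)] [NeZero (l2 α β)] (hα : α ≠ 0) (hβ : β ≠ 0)
    (hμ₁ : μ₁ ≠ 0) (hμ₂ : μ₂ ≠ 0) (hμ₃ : μ₃ ≠ 0) (W : Submodule K (V12 α β))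
    (hW : ∀ x : (QM α β)ᵐᵒᵖ, ∀ w ∈ W, rep α β μ₁ μ₂ μ₃ h x w ∈ W) : W = ⊥ ∨ W = ⊤ := by
  have hdiag : ∀ (x : (QM α β)ᵐᵒᵖ) (d : V12 α β), rep α β μ₁ μ₂ μ₃ h x = weightedShift d 0 →
      d ∈ W.multipliers := fun x d hx =>
    Submodule.mem_multipliers.mpr fun f hf => weightedShift_zero_apply d f ▸ hx ▸ hW x f hf
  refine Submodule.eq_bot_or_eq_top_of_separates (ZMod.addSubmonoid_closure_pair_eq_top _ _)
    (separates hα hβ hμ₂ hμ₃ ?_ ?_ ?_) ?_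
  · exact hdiag (op (X21 α β) * op (X12 α β)) _
      (by rw [map_mul, rep_X21, rep_X12, x21_mul_x12 hμ₂])
  · exact hdiag (op (X22 α β) * op (X11 α β)) _
      (by rw [map_mul, rep_X22, rep_X11, x22_mul_x11 hμ₁])
  · exact hdiag (op (X21 α β) ^ l2 α β) _ (by rw [map_pow, rep_X21, x21_pow_l2])
  · rintro v (rfl | rfl)
    · refine ⟨_, coeff22_ne_zero hα hμ₁, fun f hf => ?_⟩
      simpa only [rep_X22, x22] using hW (op (X22 α β)) f hf
    · refine ⟨_, coeff21_ne_zero hα hμ₂, fun f hf => ?_⟩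
      simpa only [rep_X21, x21] using hW (op (X21 α β)) f hf

end V2

theorem stmt12_general (α β μ₁ μ₂ μ₃ : K)
    (hα : α ≠ 0) (hβ : β ≠ 0) (hoα : 0 < orderOf α) (hoβ : 0 < orderOf β)
    (hμ₁ : μ₁ ≠ 0) (hμ₂ : μ₂ ≠ 0) (hμ₃ : μ₃ ≠ 0) :
    ∃ ρ : (QM α β)ᵐᵒᵖ →ₐ[K] Module.End K (V12 α β),
      IsV2Rep α β μ₁ μ₂ μ₃ ρ ∧
      ((⊥ : Submodule K (V12 α β)) ≠ ⊤) ∧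
      (∀ W : Submodule K (V12 α β),
        (∀ x : (QM α β)ᵐᵒᵖ, ∀ w ∈ W, ρ x w ∈ W) → W = ⊥ ∨ W = ⊤) ∧
      Module.finrank K (V12 α β) = l1 α β * l2 α β := by
  have : NeZero (l1 α β) := ⟨(l1_pos hoα hoβ).ne'⟩
  have : NeZero (l2 α β) := ⟨(l2_pos hoα hoβ).ne'⟩
  have h := V2.lift_rel (μ₃ := μ₃) hα hβ hμ₁ hμ₂
  exact ⟨V2.rep α β μ₁ μ₂ μ₃ h, V2.isV2Rep_rep h, bot_ne_top,
    V2.rep_simple h hα hβ hμ₁ hμ₂ hμ₃, by simp⟩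

/-- Theorem 5.2 of the paper. Let `K` be algebraically closed,
`α, β` roots of unity with `αβ ≠ 1`. For every `μ = (μ₁,μ₂,μ₃) ∈ (K*)³` the
stated formulas define a right `M₂(α,β)`-module structure on `V₂(μ)`, and
`V₂(μ)` is a simple `M₂(α,β)`-module of `K`-dimension `l₁·l₂`. -/
theorem stmt12 [IsAlgClosed K] (α β μ₁ μ₂ μ₃ : K)
    (hα : α ≠ 0) (hβ : β ≠ 0) (hoα : 0 < orderOf α) (hoβ : 0 < orderOf β)
    (hab : α * β ≠ 1)
    (hμ₁ : μ₁ ≠ 0) (hμ₂ : μ₂ ≠ 0) (hμ₃ : μ₃ ≠ 0) :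
    ∃ ρ : (QM α β)ᵐᵒᵖ →ₐ[K] Module.End K (V12 α β),
      IsV2Rep α β μ₁ μ₂ μ₃ ρ ∧
      ((⊥ : Submodule K (V12 α β)) ≠ ⊤) ∧
      (∀ W : Submodule K (V12 α β),
        (∀ x : (QM α β)ᵐᵒᵖ, ∀ w ∈ W, ρ x w ∈ W) → W = ⊥ ∨ W = ⊤) ∧
      Module.finrank K (V12 α β) = l1 α β * l2 α β :=
  stmt12_general α β μ₁ μ₂ μ₃ hα hβ hoα hoβ hμ₁ hμ₂ hμ₃
end
end

section
/- The central element X₁₁^{l₁·l} (equivalently, the operator given by X₁₁^{l₁}) acts invertibly on V₁(μ) for every μ ∈ (K*)⁴; X₁₁^{l₁} acts as zero on V₂(μ) while X₂₂^{l₁} acts invertibly on V₂(μ) for every μ ∈ (K*)³; and both X₁₁^{l₁} and X₂₂^{l₁} act as zero on V₃(μ) for every μ ∈ (K*)². Consequently, for all choices of parameters, no module V₁(μ) is isomorphic to any V₂(λ) or V₃(λ), and no V₂(μ) is isomorphic to any V₃(λ); i.e., the three types of simple M₂(α,β)-modules are pairwise non-isomorphic. -/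
noncomputable section

open MulOpposite

variable {K : Type*} [Field K]

/-!
Every generator acts on the basis `e(a,b)` by a weighted shift of the indices. On `V₁` the
operator `X₁₁` and on `V₂` the operator `X₂₂` permute the basis cyclically with nonzero weights,
so all their powers are invertible. The remaining shifts (`X₁₁` on `V₂` and `V₃`, `X₂₂` on `V₃`)
move the first index monotonically towards an end where the weight vanishes, hence their
`l₁`-th powers are zero, as `ord(αβ) ≤ l₁`. An additive isomorphism intertwining two actions
cannot carry an invertible operator to zero.
-/

section WeightedShift

variable {ι : Type*} [DecidableEq ι] [Fintype ι]

theorem bijective_of_apply_single_eq_smul (T : Module.End K (ι → K))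
    (σ : ι → ι) (hσ : Function.Surjective σ) (c : ι → K) (hc : ∀ i, c i ≠ 0)
    (hT : ∀ i, T (Pi.single i 1) = c i • Pi.single (σ i) 1) :
    Function.Bijective T := by
  have hsurj : Function.Surjective T := by
    rw [← LinearMap.range_eq_top, eq_top_iff, ← (Pi.basisFun K ι).span_eq, Submodule.span_le]
    rintro _ ⟨j, rfl⟩
    obtain ⟨i, rfl⟩ := hσ j
    refine ⟨(c i)⁻¹ • Pi.single i 1, ?_⟩
    rw [map_smul, hT, smul_smul, inv_mul_cancel₀ (hc i), one_smul, Pi.basisFun_apply]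
  exact ⟨LinearMap.injective_iff_surjective.mpr hsurj, hsurj⟩

theorem pow_eq_zero_of_apply_single_eq_smul (T : Module.End K (ι → K))
    (σ : ι → ι) (c : ι → K) (hT : ∀ i, T (Pi.single i 1) = c i • Pi.single (σ i) 1)
    (height : ι → ℕ) (hdesc : ∀ i, c i ≠ 0 → height (σ i) < height i)
    {m : ℕ} (hm : ∀ i, height i < m) : T ^ m = 0 := by
  have key : ∀ m i, height i < m → (T ^ m) (Pi.single i 1) = 0 := by
    intro m
    induction m with
    | zero => intro i hi; omega
    | succ m ih =>
      intro i hi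
      rw [pow_succ, Module.End.mul_apply, hT, map_smul]
      by_cases hci : c i = 0
      · rw [hci, zero_smul]
      · rw [ih _ (by have := hdesc i hci; omega), smul_zero]
  refine (Pi.basisFun K ι).ext fun i => ?_
  rw [Pi.basisFun_apply, key m i (hm i), LinearMap.zero_apply]

end WeightedShift

theorem ZMod.val_sub_one_lt {n : ℕ} [NeZero n] {a : ZMod n} (ha : a ≠ 0) :
    (a - 1).val < a.val := by
  have hn : n ≠ 1 := by rintro rfl; exact ha (Subsingleton.elim _ _)
  have hone : (1 : ZMod n).val = 1 := ZMod.val_one'' hn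
  have hpos : 0 < a.val := ZMod.val_pos.mpr ha
  rw [ZMod.val_sub (by omega)]
  omega

theorem ZMod.val_add_one_of_lt {n : ℕ} {a : ZMod n} (h : a.val + 1 < n) :
    (a + 1).val = a.val + 1 := by
  have hone : (1 : ZMod n).val = 1 := ZMod.val_one'' (by omega)
  rw [ZMod.val_add_of_lt (by omega), hone]

theorem orderOf_mul_le_l1 (α β : K) : orderOf (α * β) ≤ l1 α β := by
  unfold l1; split <;> omega

theorem not_exists_addEquiv_intertwining {A M N : Type*} [AddZeroClass M] [AddZeroClass N]
    [Nontrivial M] (ρ : A → M → M) (ρ' : A → N → N) (x : A) (hx : Function.Injective (ρ x))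
    (hx' : ∀ w, ρ' x w = 0) : ¬ ∃ f : M ≃+ N, ∀ y v, f (ρ y v) = ρ' y (f v) := by
  rintro ⟨f, hf⟩
  have hzero : ∀ v, ρ x v = 0 := fun v => f.map_eq_zero_iff.mp ((hf x v).trans (hx' _))
  obtain ⟨v, w, hvw⟩ := exists_pair_ne M
  exact hvw (hx ((hzero v).trans (hzero w).symm))

section Representations

variable {α β : K}

theorem IsV1Rep.bijective_X11_pow [NeZero (l1 α β)] [NeZero (l2 α β)] (hβ : β ≠ 0)
    {μ₁ μ₂ μ₃ μ₄ : K} (hμ₁ : μ₁ ≠ 0) {ρ : (QM α β)ᵐᵒᵖ →ₐ[K] Module.End K (V12 α β)}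
    (hρ : IsV1Rep α β μ₁ μ₂ μ₃ μ₄ ρ) (n : ℕ) :
    Function.Bijective (ρ (op (X11 α β ^ n))) := by
  have hX11 := bijective_of_apply_single_eq_smul (ρ (op (X11 α β)))
    (fun i => (i.1 + 1, i.2)) (fun j => ⟨(j.1 - 1, j.2), by simp⟩)
    (fun i => μ₁ * β ^ i.2.val) (fun _ => mul_ne_zero hμ₁ (pow_ne_zero _ hβ))
    (fun i => hρ.1 i.1 i.2)
  rw [op_pow, map_pow, Module.End.coe_pow]
  exact hX11.iterate n

theorem IsV2Rep.X11_pow_eq_zero [NeZero (l1 α β)] [NeZero (l2 α β)] {μ₁ μ₂ μ₃ : K}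
    {ρ : (QM α β)ᵐᵒᵖ →ₐ[K] Module.End K (V12 α β)} (hρ : IsV2Rep α β μ₁ μ₂ μ₃ ρ) :
    ρ (op (X11 α β ^ l1 α β)) = 0 := by
  rw [op_pow, map_pow]
  refine pow_eq_zero_of_apply_single_eq_smul _ (fun i => (i.1 - 1, i.2)) _
    (fun i => hρ.1 i.1 i.2) (fun i => i.1.val) (fun i hi => ?_) (fun i => ZMod.val_lt i.1)
  exact ZMod.val_sub_one_lt fun h => hi (if_pos h)

theorem IsV2Rep.bijective_X22_pow [NeZero (l1 α β)] [NeZero (l2 α β)] (hα : α ≠ 0)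
    {μ₁ μ₂ μ₃ : K} (hμ₁ : μ₁ ≠ 0) {ρ : (QM α β)ᵐᵒᵖ →ₐ[K] Module.End K (V12 α β)}
    (hρ : IsV2Rep α β μ₁ μ₂ μ₃ ρ) (n : ℕ) :
    Function.Bijective (ρ (op (X22 α β ^ n))) := by
  have hX22 := bijective_of_apply_single_eq_smul (ρ (op (X22 α β)))
    (fun i => (i.1 + 1, i.2)) (fun j => ⟨(j.1 - 1, j.2), by simp⟩) _
    (fun i => by split_ifs <;> simp [hμ₁, hα]) (fun i => hρ.2.2.2 i.1 i.2)
  rw [op_pow, map_pow, Module.End.coe_pow]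
  exact hX22.iterate n

theorem IsV3Rep.X11_pow_eq_zero [NeZero (orderOf (α * β))] [NeZero (l2 α β)] {μ₁ μ₂ : K}
    {ρ : (QM α β)ᵐᵒᵖ →ₐ[K] Module.End K (V3 α β)} (hρ : IsV3Rep α β μ₁ μ₂ ρ) :
    ρ (op (X11 α β ^ l1 α β)) = 0 := by
  rw [op_pow, map_pow]
  refine pow_eq_zero_of_apply_single_eq_smul _ (fun i => (i.1 - 1, i.2)) _
    (fun i => hρ.1 i.1 i.2) (fun i => i.1.val) (fun i hi => ?_)
    (fun i => (ZMod.val_lt i.1).trans_le (orderOf_mul_le_l1 α β))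
  exact ZMod.val_sub_one_lt fun h => hi (if_pos h)

theorem IsV3Rep.X22_pow_eq_zero [NeZero (orderOf (α * β))] [NeZero (l2 α β)] {μ₁ μ₂ : K}
    {ρ : (QM α β)ᵐᵒᵖ →ₐ[K] Module.End K (V3 α β)} (hρ : IsV3Rep α β μ₁ μ₂ ρ) :
    ρ (op (X22 α β ^ l1 α β)) = 0 := by
  set n := orderOf (α * β)
  have hX22 : ∀ i, ρ (op (X22 α β)) (Pi.single i 1) =
      (if i.1.val = n - 1 then 0 else 1 : K) • Pi.single (i.1 + 1, i.2) 1 := fun i => by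
    rw [show (Pi.single i 1 : V3 α β) = e3 α β i.1 i.2 from rfl, hρ.2.2.2]
    split_ifs <;> simp [e3]
  rw [op_pow, map_pow]
  refine pow_eq_zero_of_apply_single_eq_smul _ _ _ hX22 (fun i => n - 1 - i.1.val) (fun i hi => ?_)
    (fun i => by have := orderOf_mul_le_l1 α β; have := NeZero.pos n; omega)
  have hlt : i.1.val + 1 < n := by
    have := ZMod.val_lt i.1
    have : i.1.val ≠ n - 1 := fun h => hi (if_pos h)
    omega
  simp only [ZMod.val_add_one_of_lt hlt]
  omega

end Representations

theorem stmt14_general (α β : K)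
    (hα : α ≠ 0) (hβ : β ≠ 0) (hoα : 0 < orderOf α) (hoβ : 0 < orderOf β) :
    (∀ μ₁ μ₂ μ₃ μ₄ : K, μ₁ ≠ 0 → μ₂ ≠ 0 → μ₃ ≠ 0 → μ₄ ≠ 0 →
      ∀ ρ : (QM α β)ᵐᵒᵖ →ₐ[K] Module.End K (V12 α β), IsV1Rep α β μ₁ μ₂ μ₃ μ₄ ρ →
        Function.Bijective (ρ (op (X11 α β ^ l1 α β)))) ∧
    (∀ μ₁ μ₂ μ₃ : K, μ₁ ≠ 0 → μ₂ ≠ 0 → μ₃ ≠ 0 →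
      ∀ ρ : (QM α β)ᵐᵒᵖ →ₐ[K] Module.End K (V12 α β), IsV2Rep α β μ₁ μ₂ μ₃ ρ →
        ρ (op (X11 α β ^ l1 α β)) = 0 ∧
        Function.Bijective (ρ (op (X22 α β ^ l1 α β)))) ∧
    (∀ μ₁ μ₂ : K, μ₁ ≠ 0 → μ₂ ≠ 0 →
      ∀ ρ : (QM α β)ᵐᵒᵖ →ₐ[K] Module.End K (V3 α β), IsV3Rep α β μ₁ μ₂ ρ →
        ρ (op (X11 α β ^ l1 α β)) = 0 ∧ ρ (op (X22 α β ^ l1 α β)) = 0) ∧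
    (∀ μ₁ μ₂ μ₃ μ₄ ν₁ ν₂ ν₃ : K, μ₁ ≠ 0 → μ₂ ≠ 0 → μ₃ ≠ 0 → μ₄ ≠ 0 →
        ν₁ ≠ 0 → ν₂ ≠ 0 → ν₃ ≠ 0 →
      ∀ ρ₁ ρ₂ : (QM α β)ᵐᵒᵖ →ₐ[K] Module.End K (V12 α β),
        IsV1Rep α β μ₁ μ₂ μ₃ μ₄ ρ₁ → IsV2Rep α β ν₁ ν₂ ν₃ ρ₂ →
        ¬ ∃ f : V12 α β ≃+ V12 α β,
            ∀ (x : QM α β) (v : V12 α β), f (ρ₁ (op x) v) = ρ₂ (op x) (f v)) ∧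
    (∀ μ₁ μ₂ μ₃ μ₄ ν₁ ν₂ : K, μ₁ ≠ 0 → μ₂ ≠ 0 → μ₃ ≠ 0 → μ₄ ≠ 0 →
        ν₁ ≠ 0 → ν₂ ≠ 0 →
      ∀ (ρ₁ : (QM α β)ᵐᵒᵖ →ₐ[K] Module.End K (V12 α β))
        (ρ₃ : (QM α β)ᵐᵒᵖ →ₐ[K] Module.End K (V3 α β)),
        IsV1Rep α β μ₁ μ₂ μ₃ μ₄ ρ₁ → IsV3Rep α β ν₁ ν₂ ρ₃ →
        ¬ ∃ f : V12 α β ≃+ V3 α β,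
            ∀ (x : QM α β) (v : V12 α β), f (ρ₁ (op x) v) = ρ₃ (op x) (f v)) ∧
    (∀ μ₁ μ₂ μ₃ ν₁ ν₂ : K, μ₁ ≠ 0 → μ₂ ≠ 0 → μ₃ ≠ 0 → ν₁ ≠ 0 → ν₂ ≠ 0 →
      ∀ (ρ₂ : (QM α β)ᵐᵒᵖ →ₐ[K] Module.End K (V12 α β))
        (ρ₃ : (QM α β)ᵐᵒᵖ →ₐ[K] Module.End K (V3 α β)),
        IsV2Rep α β μ₁ μ₂ μ₃ ρ₂ → IsV3Rep α β ν₁ ν₂ ρ₃ →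
        ¬ ∃ f : V12 α β ≃+ V3 α β,
            ∀ (x : QM α β) (v : V12 α β), f (ρ₂ (op x) v) = ρ₃ (op x) (f v)) := by
  have hfinα : IsOfFinOrder α := orderOf_pos_iff.mp hoα
  have hfinβ : IsOfFinOrder β := orderOf_pos_iff.mp hoβ
  have hfinβ' : IsOfFinOrder β⁻¹ :=
    isOfFinOrder_iff_pow_eq_one.mpr ⟨orderOf β, hoβ, by rw [inv_pow, pow_orderOf_eq_one, inv_one]⟩
  have hαβ : 0 < orderOf (α * β) := (hfinα.mul hfinβ).orderOf_pos
  have : NeZero (orderOf (α * β)) := ⟨hαβ.ne'⟩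
  have : NeZero (l1 α β) := ⟨(hαβ.trans_le (orderOf_mul_le_l1 α β)).ne'⟩
  have : NeZero (l2 α β) := ⟨(hfinα.mul hfinβ').orderOf_pos.ne'⟩
  refine ⟨fun _ _ _ _ hμ₁ _ _ _ _ hρ => hρ.bijective_X11_pow hβ hμ₁ _,
    fun _ _ _ hμ₁ _ _ _ hρ => ⟨hρ.X11_pow_eq_zero, hρ.bijective_X22_pow hα hμ₁ _⟩,
    fun _ _ _ _ _ hρ => ⟨hρ.X11_pow_eq_zero, hρ.X22_pow_eq_zero⟩, ?_, ?_, ?_⟩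
  · intro _ _ _ _ _ _ _ hμ₁ _ _ _ _ _ _ ρ₁ ρ₂ hρ₁ hρ₂
    exact not_exists_addEquiv_intertwining (fun x => ρ₁ (op x)) (fun x => ρ₂ (op x))
      (X11 α β ^ l1 α β) (IsV1Rep.bijective_X11_pow hβ hμ₁ hρ₁ _).1
      (LinearMap.congr_fun hρ₂.X11_pow_eq_zero)
  · intro _ _ _ _ _ _ hμ₁ _ _ _ _ _ ρ₁ ρ₃ hρ₁ hρ₃
    exact not_exists_addEquiv_intertwining (fun x => ρ₁ (op x)) (fun x => ρ₃ (op x))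
      (X11 α β ^ l1 α β) (IsV1Rep.bijective_X11_pow hβ hμ₁ hρ₁ _).1
      (LinearMap.congr_fun hρ₃.X11_pow_eq_zero)
  · intro _ _ _ _ _ hμ₁ _ _ _ _ ρ₂ ρ₃ hρ₂ hρ₃
    exact not_exists_addEquiv_intertwining (fun x => ρ₂ (op x)) (fun x => ρ₃ (op x))
      (X22 α β ^ l1 α β) (IsV2Rep.bijective_X22_pow hα hμ₁ hρ₂ _).1
      (LinearMap.congr_fun hρ₃.X22_pow_eq_zero)

/-- Remark 5.4 of the paper. `X₁₁^{l₁}` acts invertibly on every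
`V₁(μ)`; `X₁₁^{l₁}` acts as zero and `X₂₂^{l₁}` acts invertibly on every `V₂(μ)`;
both `X₁₁^{l₁}` and `X₂₂^{l₁}` act as zero on every `V₃(μ)`. Consequently the
three types of simple `M₂(α,β)`-modules are pairwise non-isomorphic. -/
theorem stmt14 [IsAlgClosed K] (α β : K)
    (hα : α ≠ 0) (hβ : β ≠ 0) (hoα : 0 < orderOf α) (hoβ : 0 < orderOf β)
    (hab : α * β ≠ 1) :
    (∀ μ₁ μ₂ μ₃ μ₄ : K, μ₁ ≠ 0 → μ₂ ≠ 0 → μ₃ ≠ 0 → μ₄ ≠ 0 →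
      ∀ ρ : (QM α β)ᵐᵒᵖ →ₐ[K] Module.End K (V12 α β), IsV1Rep α β μ₁ μ₂ μ₃ μ₄ ρ →
        Function.Bijective (ρ (op (X11 α β ^ l1 α β)))) ∧
    (∀ μ₁ μ₂ μ₃ : K, μ₁ ≠ 0 → μ₂ ≠ 0 → μ₃ ≠ 0 →
      ∀ ρ : (QM α β)ᵐᵒᵖ →ₐ[K] Module.End K (V12 α β), IsV2Rep α β μ₁ μ₂ μ₃ ρ →
        ρ (op (X11 α β ^ l1 α β)) = 0 ∧
        Function.Bijective (ρ (op (X22 α β ^ l1 α β)))) ∧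
    (∀ μ₁ μ₂ : K, μ₁ ≠ 0 → μ₂ ≠ 0 →
      ∀ ρ : (QM α β)ᵐᵒᵖ →ₐ[K] Module.End K (V3 α β), IsV3Rep α β μ₁ μ₂ ρ →
        ρ (op (X11 α β ^ l1 α β)) = 0 ∧ ρ (op (X22 α β ^ l1 α β)) = 0) ∧
    (∀ μ₁ μ₂ μ₃ μ₄ ν₁ ν₂ ν₃ : K, μ₁ ≠ 0 → μ₂ ≠ 0 → μ₃ ≠ 0 → μ₄ ≠ 0 →
        ν₁ ≠ 0 → ν₂ ≠ 0 → ν₃ ≠ 0 →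
      ∀ ρ₁ ρ₂ : (QM α β)ᵐᵒᵖ →ₐ[K] Module.End K (V12 α β),
        IsV1Rep α β μ₁ μ₂ μ₃ μ₄ ρ₁ → IsV2Rep α β ν₁ ν₂ ν₃ ρ₂ →
        ¬ ∃ f : V12 α β ≃+ V12 α β,
            ∀ (x : QM α β) (v : V12 α β), f (ρ₁ (op x) v) = ρ₂ (op x) (f v)) ∧
    (∀ μ₁ μ₂ μ₃ μ₄ ν₁ ν₂ : K, μ₁ ≠ 0 → μ₂ ≠ 0 → μ₃ ≠ 0 → μ₄ ≠ 0 →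
        ν₁ ≠ 0 → ν₂ ≠ 0 →
      ∀ (ρ₁ : (QM α β)ᵐᵒᵖ →ₐ[K] Module.End K (V12 α β))
        (ρ₃ : (QM α β)ᵐᵒᵖ →ₐ[K] Module.End K (V3 α β)),
        IsV1Rep α β μ₁ μ₂ μ₃ μ₄ ρ₁ → IsV3Rep α β ν₁ ν₂ ρ₃ →
        ¬ ∃ f : V12 α β ≃+ V3 α β,
            ∀ (x : QM α β) (v : V12 α β), f (ρ₁ (op x) v) = ρ₃ (op x) (f v)) ∧
    (∀ μ₁ μ₂ μ₃ ν₁ ν₂ : K, μ₁ ≠ 0 → μ₂ ≠ 0 → μ₃ ≠ 0 → ν₁ ≠ 0 → ν₂ ≠ 0 →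
      ∀ (ρ₂ : (QM α β)ᵐᵒᵖ →ₐ[K] Module.End K (V12 α β))
        (ρ₃ : (QM α β)ᵐᵒᵖ →ₐ[K] Module.End K (V3 α β)),
        IsV2Rep α β μ₁ μ₂ μ₃ ρ₂ → IsV3Rep α β ν₁ ν₂ ρ₃ →
        ¬ ∃ f : V12 α β ≃+ V3 α β,
            ∀ (x : QM α β) (v : V12 α β), f (ρ₂ (op x) v) = ρ₃ (op x) (f v)) :=
  stmt14_general α β hα hβ hoα hoβ
end
end
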